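/- arXiv:1602.03775 — 4 statements merged into one kernel-verified Lean document; each statement's English description precedes it below -/
import Mathlib

section
/- Let ℓ≥1, let J be a real invertible 2ℓ×2ℓ matrix with Jᵀ=−J, and let DK be a real 2ℓ×ℓ matrix such that DKᵀDK is invertible and DKᵀJDK=0 (isotropy). Set N=(DKᵀDK)⁻¹ and let M=[DK | J⁻¹DK N] be the 2ℓ×2ℓ matrix whose first ℓ columns are those of DK and whose last ℓ columns are those of J⁻¹DKN. Then, in ℓ×ℓ block form, MᵀJM = [[0, I_ℓ],[−I_ℓ, −NᵀDKᵀJ⁻¹DKN]]; in particular MᵀJM and M are invertible, and (MᵀJM)⁻¹ = [[−NᵀDKᵀJ⁻¹DKN, −I_ℓ],[I_ℓ, 0]]. -/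
open Matrix

/-!
Write `C = J⁻¹ DK N`, so that `J C = DK N`. Antisymmetry of `J` turns this into
`Cᵀ J = -(J C)ᵀ = -Nᵀ DKᵀ`, and every block of `MᵀJM` is then read off from isotropy and
`DKᵀ DK N = 1`. The resulting block matrix has an explicit two-sided inverse, which makes
`(MᵀJM)⁻¹ Mᵀ J` a left inverse of the square matrix `M`.
-/

namespace Matrix

variable {n m m₁ m₂ R : Type*} [CommRing R]

theorem fromCols_transpose_mul_mul_fromCols [Fintype n]
    (A₁ : Matrix n m₁ R) (A₂ : Matrix n m₂ R) (J : Matrix n n R)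
    (B₁ : Matrix n m₁ R) (B₂ : Matrix n m₂ R) :
    (fromCols A₁ A₂)ᵀ * J * fromCols B₁ B₂ =
      fromBlocks (A₁ᵀ * J * B₁) (A₁ᵀ * J * B₂) (A₂ᵀ * J * B₁) (A₂ᵀ * J * B₂) := by
  rw [transpose_fromCols, fromRows_mul, fromRows_mul_fromCols]

theorem transpose_mul_eq_neg_transpose_of_transpose_eq_neg [Fintype n] {J : Matrix n n R}
    (hJ : Jᵀ = -J) (C : Matrix n m R) : Cᵀ * J = -(J * C)ᵀ := by
  rw [transpose_mul, hJ, Matrix.mul_neg, neg_neg]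

theorem fromBlocks_zero_one_mul_fromBlocks_neg_one [Fintype m] [DecidableEq m]
    (B : Matrix m m R) :
    fromBlocks 0 1 (-1) (-B) * fromBlocks (-B) (-1) 1 0 = 1 := by
  simp [fromBlocks_multiply, ← fromBlocks_one]

theorem fromBlocks_neg_one_mul_fromBlocks_zero_one [Fintype m] [DecidableEq m]
    (B : Matrix m m R) :
    fromBlocks (-B) (-1) 1 0 * fromBlocks 0 1 (-1) (-B) = 1 := by
  simp [fromBlocks_multiply, ← fromBlocks_one]

theorem isotropic_frame_symplectic_gram [Fintype n] [Fintype m] [DecidableEq n] [DecidableEq m]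
    {J : Matrix n n R} {D : Matrix n m R}
    (hJdet : IsUnit J.det) (hJanti : Jᵀ = -J) (hGram : IsUnit (Dᵀ * D).det)
    (hiso : Dᵀ * J * D = 0) :
    (fromCols D (J⁻¹ * D * (Dᵀ * D)⁻¹))ᵀ * J * fromCols D (J⁻¹ * D * (Dᵀ * D)⁻¹) =
      fromBlocks 0 1 (-1) (-((Dᵀ * D)⁻¹ᵀ * Dᵀ * J⁻¹ * D * (Dᵀ * D)⁻¹)) := by
  set N := (Dᵀ * D)⁻¹
  set C := J⁻¹ * D * N
  have hJC : J * C = D * N := by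
    simp only [C, ← Matrix.mul_assoc, mul_nonsing_inv J hJdet, Matrix.one_mul]
  have hCJ : Cᵀ * J = -(Nᵀ * Dᵀ) := by
    rw [transpose_mul_eq_neg_transpose_of_transpose_eq_neg hJanti, hJC, transpose_mul]
  have hGN : Dᵀ * D * N = 1 := mul_nonsing_inv _ hGram
  have hN : Nᵀ = N := by rw [transpose_nonsing_inv, transpose_mul, transpose_transpose]
  have hNG : Nᵀ * Dᵀ * D = 1 := by rw [hN, Matrix.mul_assoc, nonsing_inv_mul _ hGram]
  have h12 : Dᵀ * J * C = 1 := by rw [Matrix.mul_assoc, hJC, ← Matrix.mul_assoc, hGN]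
  have h21 : Cᵀ * J * D = -1 := by rw [hCJ, Matrix.neg_mul, hNG]
  have h22 : Cᵀ * J * C = -(Nᵀ * Dᵀ * J⁻¹ * D * N) := by
    rw [hCJ, Matrix.neg_mul]
    simp only [C, Matrix.mul_assoc]
  rw [fromCols_transpose_mul_mul_fromCols, hiso, h12, h21, h22]

end Matrix

theorem center_frame_inverse_general
    (ℓ : ℕ)
    (J : Matrix (Fin (2 * ℓ)) (Fin (2 * ℓ)) ℝ)
    (hJdet : IsUnit J.det) (hJanti : Jᵀ = -J)
    (DK : Matrix (Fin (2 * ℓ)) (Fin ℓ) ℝ)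
    (hGram : IsUnit (DKᵀ * DK).det)
    (hiso : DKᵀ * J * DK = 0) :
    let N : Matrix (Fin ℓ) (Fin ℓ) ℝ := (DKᵀ * DK)⁻¹
    let M : Matrix (Fin (2 * ℓ)) (Fin ℓ ⊕ Fin ℓ) ℝ :=
      Matrix.fromCols DK (J⁻¹ * DK * N)
    let B : Matrix (Fin ℓ) (Fin ℓ) ℝ := Nᵀ * DKᵀ * J⁻¹ * DK * N
    Mᵀ * J * M = Matrix.fromBlocks 0 1 (-1) (-B) ∧
      (Mᵀ * J * M) * Matrix.fromBlocks (-B) (-1) 1 0 = 1 ∧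
      Matrix.fromBlocks (-B) (-1) 1 0 * (Mᵀ * J * M) = 1 ∧
      ∃ M' : Matrix (Fin ℓ ⊕ Fin ℓ) (Fin (2 * ℓ)) ℝ, M' * M = 1 ∧ M * M' = 1 := by
  intro N M B
  have hGramM : Mᵀ * J * M = fromBlocks 0 1 (-1) (-B) :=
    isotropic_frame_symplectic_gram hJdet hJanti hGram hiso
  have hLeft : fromBlocks (-B) (-1) 1 0 * (Mᵀ * J * M) = 1 := by
    rw [hGramM, fromBlocks_neg_one_mul_fromBlocks_zero_one]
  have hLeftM : ((fromBlocks (-B) (-1) 1 0 : Matrix (Fin ℓ ⊕ Fin ℓ) (Fin ℓ ⊕ Fin ℓ) ℝ) *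
      (Mᵀ * J)) * M = 1 := by
    rw [Matrix.mul_assoc, hLeft]
  have hcard : Fintype.card (Fin ℓ ⊕ Fin ℓ) = Fintype.card (Fin (2 * ℓ)) := by
    simp [two_mul]
  refine ⟨hGramM, ?_, hLeft, _, hLeftM, (mul_eq_one_comm_of_card_eq _ _ _ hcard).mp hLeftM⟩
  rw [hGramM, fromBlocks_zero_one_mul_fromBlocks_neg_one]

/-- Lemma `isinvariant` (finite-dimensional linear algebra): for an antisymmetric invertible
`J`, an isotropic `DK` with invertible Gram matrix, the frame
`M = [DK | J⁻¹ DK N]`, `N = (DKᵀDK)⁻¹`, satisfies, in `ℓ×ℓ` block form,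
`MᵀJM = [[0, I],[−I, −NᵀDKᵀJ⁻¹DKN]]`; in particular `MᵀJM` and `M` are invertible and
`(MᵀJM)⁻¹ = [[−NᵀDKᵀJ⁻¹DKN, −I],[I, 0]]`. -/
theorem center_frame_inverse
    (ℓ : ℕ) (hℓ : 1 ≤ ℓ)
    (J : Matrix (Fin (2 * ℓ)) (Fin (2 * ℓ)) ℝ)
    (hJdet : IsUnit J.det) (hJanti : Jᵀ = -J)
    (DK : Matrix (Fin (2 * ℓ)) (Fin ℓ) ℝ)
    (hGram : IsUnit (DKᵀ * DK).det)
    (hiso : DKᵀ * J * DK = 0) :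
    let N : Matrix (Fin ℓ) (Fin ℓ) ℝ := (DKᵀ * DK)⁻¹
    let M : Matrix (Fin (2 * ℓ)) (Fin ℓ ⊕ Fin ℓ) ℝ :=
      Matrix.fromCols DK (J⁻¹ * DK * N)
    let B : Matrix (Fin ℓ) (Fin ℓ) ℝ := Nᵀ * DKᵀ * J⁻¹ * DK * N
    Mᵀ * J * M = Matrix.fromBlocks 0 1 (-1) (-B) ∧
      (Mᵀ * J * M) * Matrix.fromBlocks (-B) (-1) 1 0 = 1 ∧
      Matrix.fromBlocks (-B) (-1) 1 0 * (Mᵀ * J * M) = 1 ∧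
      ∃ M' : Matrix (Fin ℓ ⊕ Fin ℓ) (Fin (2 * ℓ)) ℝ, M' * M = 1 ∧ M * M' = 1 :=
  center_frame_inverse_general ℓ J hJdet hJanti DK hGram hiso
end

section
/- Let ℓ≥1, ω∈ℝ^ℓ, let J be a real invertible 2ℓ×2ℓ matrix with Jᵀ=−J, and let H:ℝ^{2ℓ}→ℝ be of class C². Let K:ℝ^ℓ→ℝ^{2ℓ} be C², ℤ^ℓ-periodic, and suppose that for every θ: (i) ∂_ωK(θ) = J⁻¹∇H(K(θ)) (K parametrizes an invariant torus with frequency ω); (ii) DK(θ)ᵀDK(θ) is invertible, with inverse denoted N(θ); (iii) DK(θ)ᵀJDK(θ)=0 (the torus is isotropic). Define A(θ)=J⁻¹∇²H(K(θ)), M(θ)=[DK(θ) | J⁻¹DK(θ)N(θ)] (a 2ℓ×2ℓ matrix), and S(θ)=N(θ)DK(θ)ᵀ[ J⁻¹∂_ω(DK·N)(θ) − A(θ)J⁻¹DK(θ)N(θ) ]. Then for all θ one has the automatic-reducibility identity ∂_ωM(θ) − A(θ)M(θ) = M(θ)·[[0_ℓ, S(θ)],[0_ℓ, 0_ℓ]]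 (in ℓ×ℓ block form). -/
/-!
Differentiating the invariance equation `∂_ω K = J⁻¹ ∇H(K)` and using the symmetry of second
derivatives gives `∂_ω DK = A DK`, so the first block column of `∂_ω M - A M` vanishes. For the
second column `E = J⁻¹ ∂_ω(DK N) - A J⁻¹ DK N`, differentiating `DKᵀ DK N = 1` and using that
`A = J⁻¹ ∇²H` is infinitesimally symplectic (`Aᵀ J + J A = 0`) gives `DKᵀ J E = 0`. An isotropic
frame `DK` of rank `ℓ` in dimension `2ℓ` is Lagrangian, so no nonzero vector is annihilated by both
`DKᵀ` and `DKᵀ J`; hence `E` lies in the range of `DK`, i.e. `E = DK N DKᵀ E = DK S`.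
-/

open Matrix Real

noncomputable section

/-- The `2ℓ×ℓ` Jacobian matrix of `K : ℝ^ℓ → ℝ^m` at `θ`. -/
def jacR {ℓ m : ℕ} (K : (Fin ℓ → ℝ) → Fin m → ℝ) (θ : Fin ℓ → ℝ) :
    Matrix (Fin m) (Fin ℓ) ℝ :=
  Matrix.of fun i a => fderiv ℝ K θ (Pi.single a 1) i

/-- The gradient of `H : ℝ^m → ℝ` (w.r.t. the standard inner product). -/
def gradR {m : ℕ} (H : (Fin m → ℝ) → ℝ) (y : Fin m → ℝ) : Fin m → ℝ :=
  fun i => fderiv ℝ H y (Pi.single i 1)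

/-- The Hessian matrix of `H : ℝ^m → ℝ`. -/
def hessR {m : ℕ} (H : (Fin m → ℝ) → ℝ) (y : Fin m → ℝ) : Matrix (Fin m) (Fin m) ℝ :=
  Matrix.of fun i j => fderiv ℝ (fun z => fderiv ℝ H z (Pi.single j 1)) y (Pi.single i 1)

/-- Entrywise directional derivative `∂_ω G` of a matrix-valued function. -/
def matDirDeriv {ℓ : ℕ} {m n : Type*} (ω : Fin ℓ → ℝ)
    (G : (Fin ℓ → ℝ) → Matrix m n ℝ) (θ : Fin ℓ → ℝ) : Matrix m n ℝ :=
  Matrix.of fun i j => fderiv ℝ (fun θ' => G θ' i j) θ ω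

/-- `N(θ) = (DK(θ)ᵀ DK(θ))⁻¹`. -/
def Nmat {ℓ : ℕ} (K : (Fin ℓ → ℝ) → Fin (2 * ℓ) → ℝ) (θ : Fin ℓ → ℝ) :
    Matrix (Fin ℓ) (Fin ℓ) ℝ :=
  ((jacR K θ)ᵀ * jacR K θ)⁻¹

/-- The frame `M(θ) = [DK(θ) | J⁻¹ DK(θ) N(θ)]`. -/
def Mmat {ℓ : ℕ} (J : Matrix (Fin (2 * ℓ)) (Fin (2 * ℓ)) ℝ)
    (K : (Fin ℓ → ℝ) → Fin (2 * ℓ) → ℝ) (θ : Fin ℓ → ℝ) :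
    Matrix (Fin (2 * ℓ)) (Fin ℓ ⊕ Fin ℓ) ℝ :=
  Matrix.fromCols (jacR K θ) (J⁻¹ * jacR K θ * Nmat K θ)

/-- `A(θ) = J⁻¹ ∇²H(K(θ))`. -/
def Amat {ℓ : ℕ} (J : Matrix (Fin (2 * ℓ)) (Fin (2 * ℓ)) ℝ)
    (H : (Fin (2 * ℓ) → ℝ) → ℝ) (K : (Fin ℓ → ℝ) → Fin (2 * ℓ) → ℝ) (θ : Fin ℓ → ℝ) :
    Matrix (Fin (2 * ℓ)) (Fin (2 * ℓ)) ℝ :=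
  J⁻¹ * hessR H (K θ)

/-- The twist matrix
`S(θ) = N DKᵀ [ J⁻¹ ∂_ω(DK·N) − A J⁻¹ DK N ](θ)`. -/
def Smat {ℓ : ℕ} (ω : Fin ℓ → ℝ) (J : Matrix (Fin (2 * ℓ)) (Fin (2 * ℓ)) ℝ)
    (H : (Fin (2 * ℓ) → ℝ) → ℝ) (K : (Fin ℓ → ℝ) → Fin (2 * ℓ) → ℝ) (θ : Fin ℓ → ℝ) :
    Matrix (Fin ℓ) (Fin ℓ) ℝ :=
  Nmat K θ * (jacR K θ)ᵀ *
    (J⁻¹ * matDirDeriv ω (fun θ' => jacR K θ' * Nmat K θ') θ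
      - Amat J H K θ * (J⁻¹ * jacR K θ * Nmat K θ))

section EntrywiseDifferentiability

variable {𝕜 E : Type*} [NontriviallyNormedField 𝕜] [NormedAddCommGroup E] [NormedSpace 𝕜 E]
  {x : E} {m n p : Type*}

theorem DifferentiableAt.matrix_mul_apply [Fintype n] {A : E → Matrix m n 𝕜}
    {B : E → Matrix n p 𝕜} (hA : ∀ i j, DifferentiableAt 𝕜 (fun x => A x i j) x)
    (hB : ∀ i j, DifferentiableAt 𝕜 (fun x => B x i j) x) (i : m) (k : p) :
    DifferentiableAt 𝕜 (fun x => (A x * B x) i k) x := by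
  simp only [mul_apply]
  exact .fun_sum fun j _ => (hA i j).mul (hB j k)

theorem DifferentiableAt.matrix_det [Fintype n] [DecidableEq n] {A : E → Matrix n n 𝕜}
    (hA : ∀ i j, DifferentiableAt 𝕜 (fun x => A x i j) x) :
    DifferentiableAt 𝕜 (fun x => (A x).det) x := by
  simp only [det_apply]
  exact .fun_sum fun σ _ => .const_smul
    (HasFDerivAt.finsetProd fun i _ => (hA (σ i) i).hasFDerivAt).differentiableAt _

theorem DifferentiableAt.matrix_adjugate_apply [Fintype n] [DecidableEq n]
    {A : E → Matrix n n 𝕜} (hA : ∀ i j, DifferentiableAt 𝕜 (fun x => A x i j) x) (i j : n) :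
    DifferentiableAt 𝕜 (fun x => (A x).adjugate i j) x := by
  simp only [adjugate_apply]
  refine .matrix_det fun k l => ?_
  by_cases hk : k = j
  · simp only [hk, updateRow_self]
    exact differentiableAt_const _
  · simpa only [updateRow_ne hk] using hA k l

theorem DifferentiableAt.matrix_inv_apply [Fintype n] [DecidableEq n]
    {A : E → Matrix n n 𝕜} (hA : ∀ i j, DifferentiableAt 𝕜 (fun x => A x i j) x)
    (hdet : IsUnit (A x).det) (i j : n) :
    DifferentiableAt 𝕜 (fun x => (A x)⁻¹ i j) x := by
  simp only [inv_def, Ring.inverse_eq_inv', Matrix.smul_apply, smul_eq_mul]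
  exact ((DifferentiableAt.matrix_det hA).inv hdet.ne_zero).mul (.matrix_adjugate_apply hA i j)

end EntrywiseDifferentiability

section DirectionalDerivative

variable {ℓ : ℕ} {ω θ : Fin ℓ → ℝ} {m n p : Type*}

theorem matDirDeriv_mul [Fintype n] {A : (Fin ℓ → ℝ) → Matrix m n ℝ}
    {B : (Fin ℓ → ℝ) → Matrix n p ℝ} (hA : ∀ i j, DifferentiableAt ℝ (fun θ => A θ i j) θ)
    (hB : ∀ i j, DifferentiableAt ℝ (fun θ => B θ i j) θ) :
    matDirDeriv ω (fun θ => A θ * B θ) θ = matDirDeriv ω A θ * B θ + A θ * matDirDeriv ω B θ := by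
  ext i k
  simp only [matDirDeriv, of_apply, Matrix.add_apply, mul_apply, ← Finset.sum_add_distrib]
  rw [fderiv_fun_sum (A := fun j θ => A θ i j * B θ j k) fun j _ => (hA i j).mul (hB j k)]
  simp only [FunLike.coe_sum, Finset.sum_apply, fderiv_fun_mul (hA _ _) (hB _ _),
    _root_.add_apply, _root_.smul_apply, smul_eq_mul]
  exact Finset.sum_congr rfl fun j _ => by ring

theorem matDirDeriv_const (C : Matrix m n ℝ) : matDirDeriv ω (fun _ => C) θ = 0 := by
  ext; simp [matDirDeriv]

theorem matDirDeriv_const_mul [Fintype n] (C : Matrix m n ℝ) {B : (Fin ℓ → ℝ) → Matrix n p ℝ}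
    (hB : ∀ i j, DifferentiableAt ℝ (fun θ => B θ i j) θ) :
    matDirDeriv ω (fun θ => C * B θ) θ = C * matDirDeriv ω B θ := by
  rw [matDirDeriv_mul (A := fun _ => C) (fun _ _ => differentiableAt_const _) hB,
    matDirDeriv_const, Matrix.zero_mul, zero_add]

theorem matDirDeriv_fromCols {m n₁ n₂ : Type*} (A : (Fin ℓ → ℝ) → Matrix m n₁ ℝ)
    (B : (Fin ℓ → ℝ) → Matrix m n₂ ℝ) :
    matDirDeriv ω (fun θ => fromCols (A θ) (B θ)) θ
      = fromCols (matDirDeriv ω A θ) (matDirDeriv ω B θ) := by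
  ext i (j | j) <;> rfl

end DirectionalDerivative

theorem fderiv_fderiv_apply {𝕜 E F : Type*} [NontriviallyNormedField 𝕜] [NormedAddCommGroup E]
    [NormedSpace 𝕜 E] [NormedAddCommGroup F] [NormedSpace 𝕜 F] {f : E → F} {x : E}
    (hf : DifferentiableAt 𝕜 (fderiv 𝕜 f) x) (v w : E) :
    fderiv 𝕜 (fun y => fderiv 𝕜 f y v) x w = fderiv 𝕜 (fderiv 𝕜 f) x w v := by
  simp [fderiv_clm_apply hf (differentiableAt_const v)]

theorem ContDiffAt.differentiableAt_fderiv {𝕜 E F : Type*} [NontriviallyNormedField 𝕜]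
    [NormedAddCommGroup E] [NormedSpace 𝕜 E] [NormedAddCommGroup F] [NormedSpace 𝕜 F]
    {f : E → F} {x : E} (hf : ContDiffAt 𝕜 2 f x) : DifferentiableAt 𝕜 (fderiv 𝕜 f) x :=
  (hf.fderiv_right (m := 1) le_rfl).differentiableAt one_ne_zero

section JacobianAndHessian

variable {ℓ m p : ℕ}

theorem jacR_eq_toMatrix' (K : (Fin ℓ → ℝ) → Fin m → ℝ) (θ : Fin ℓ → ℝ) :
    jacR K θ = LinearMap.toMatrix' (fderiv ℝ K θ : (Fin ℓ → ℝ) →ₗ[ℝ] Fin m → ℝ) := by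
  ext i a
  simp [jacR, LinearMap.toMatrix'_apply]

theorem jacR_comp {f : (Fin m → ℝ) → Fin p → ℝ} {g : (Fin ℓ → ℝ) → Fin m → ℝ} {θ : Fin ℓ → ℝ}
    (hf : DifferentiableAt ℝ f (g θ)) (hg : DifferentiableAt ℝ g θ) :
    jacR (fun θ => f (g θ)) θ = jacR f (g θ) * jacR g θ := by
  rw [jacR_eq_toMatrix', fderiv_fun_comp θ hf hg]
  exact LinearMap.toMatrix'_comp _ _

theorem jacR_mulVec (A : Matrix (Fin p) (Fin m) ℝ) {f : (Fin ℓ → ℝ) → Fin m → ℝ}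
    {θ : Fin ℓ → ℝ} (hf : DifferentiableAt ℝ f θ) :
    jacR (fun θ => A *ᵥ f θ) θ = A * jacR f θ := by
  set L := LinearMap.toContinuousLinearMap (toLin' A)
  rw [show (fun θ => A *ᵥ f θ) = fun θ => L (f θ) from rfl, jacR_comp L.differentiableAt hf,
    jacR_eq_toMatrix' L, L.fderiv]
  exact congrArg (· * jacR f θ) (LinearMap.toMatrix'_toLin' A)

theorem differentiableAt_gradR {H : (Fin m → ℝ) → ℝ} {y : Fin m → ℝ}
    (hH : DifferentiableAt ℝ (fderiv ℝ H) y) : DifferentiableAt ℝ (gradR H) y :=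
  differentiableAt_pi.2 fun _ => hH.clm_apply (differentiableAt_const _)

theorem jacR_gradR {H : (Fin m → ℝ) → ℝ} {y : Fin m → ℝ}
    (hH : DifferentiableAt ℝ (fderiv ℝ H) y) : jacR (gradR H) y = (hessR H y)ᵀ := by
  ext j k
  exact (congrArg (· (Pi.single k 1)) (fderiv_apply (differentiableAt_gradR hH) j)).symm

theorem hessR_transpose {H : (Fin m → ℝ) → ℝ} {y : Fin m → ℝ} (hH : ContDiffAt ℝ 2 H y) :
    (hessR H y)ᵀ = hessR H y := by
  ext i j
  simp only [transpose_apply, hessR, of_apply, fderiv_fderiv_apply hH.differentiableAt_fderiv]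
  exact hH.isSymmSndFDerivAt (by simp) _ _

theorem matDirDeriv_jacR {K : (Fin ℓ → ℝ) → Fin m → ℝ} {θ : Fin ℓ → ℝ} (hK : ContDiffAt ℝ 2 K θ)
    (ω : Fin ℓ → ℝ) : matDirDeriv ω (jacR K) θ = jacR (fun θ => fderiv ℝ K θ ω) θ := by
  have hd := hK.differentiableAt_fderiv
  ext i a
  simp only [matDirDeriv, jacR, of_apply]
  rw [fderiv_apply (hd.clm_apply (differentiableAt_const _)) i]
  simp only [ContinuousLinearMap.coe_comp, Function.comp_apply, ContinuousLinearMap.proj_apply,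
    fderiv_fderiv_apply hd]
  rw [hK.isSymmSndFDerivAt (by simp)]

end JacobianAndHessian

theorem Matrix.fromCols_sub_fromCols {R : Type*} [Sub R] {m n₁ n₂ : Type*}
    (A₁ B₁ : Matrix m n₁ R) (A₂ B₂ : Matrix m n₂ R) :
    fromCols A₁ A₂ - fromCols B₁ B₂ = fromCols (A₁ - B₁) (A₂ - B₂) := by
  ext i (j | j) <;> rfl

theorem Matrix.fromCols_mul_fromBlocks_zero {R : Type*} [Semiring R] {m n₁ n₂ p : Type*}
    [Fintype n₁] [Fintype n₂] (A₁ : Matrix m n₁ R) (A₂ : Matrix m n₂ R) (S : Matrix n₁ p R) :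
    fromCols A₁ A₂ * fromBlocks 0 S (0 : Matrix n₂ n₁ R) 0 = fromCols 0 (A₁ * S) := by
  simp [fromCols_mul_fromBlocks]

section Isotropic

variable {R : Type*} [CommRing R] {m n p : Type*} [Fintype m] [Fintype n]
  [DecidableEq n] {J : Matrix n n R} {D : Matrix n m R}

theorem transpose_mul_add_mul_eq_zero {S : Matrix n n R} (hJ : IsUnit J.det) (hJt : Jᵀ = -J)
    (hS : Sᵀ = S) : (J⁻¹ * S)ᵀ * J + J * (J⁻¹ * S) = 0 := by
  have hJinv : J⁻¹ᵀ = -J⁻¹ := by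
    rw [transpose_nonsing_inv, hJt]
    exact inv_eq_right_inv (by rw [Matrix.neg_mul, Matrix.mul_neg, neg_neg, mul_nonsing_inv _ hJ])
  rw [transpose_mul, hS, hJinv, mul_nonsing_inv_cancel_left _ _ hJ, Matrix.mul_neg,
    Matrix.neg_mul, Matrix.mul_assoc, nonsing_inv_mul _ hJ, Matrix.mul_one, neg_add_cancel]

theorem transpose_mul_mul_sub_mul_eq_zero {A : Matrix n n R} {N : Matrix m m R}
    {W : Matrix n m R} (hJ : IsUnit J.det) (hA : Aᵀ * J + J * A = 0)
    (hW : Dᵀ * W = -((A * D)ᵀ * (D * N))) :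
    Dᵀ * J * (J⁻¹ * W - A * (J⁻¹ * D * N)) = 0 := by
  have hJP : J * (J⁻¹ * D * N) = D * N := by
    rw [Matrix.mul_assoc, mul_nonsing_inv_cancel_left _ _ hJ]
  calc Dᵀ * J * (J⁻¹ * W - A * (J⁻¹ * D * N))
      = -(Dᵀ * (Aᵀ * J + J * A) * (J⁻¹ * D * N)) := by
        rw [Matrix.mul_sub, Matrix.mul_assoc, mul_nonsing_inv_cancel_left _ _ hJ, hW,
          transpose_mul, ← hJP]
        simp only [Matrix.mul_add, Matrix.add_mul, Matrix.mul_assoc]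
        abel
    _ = 0 := by rw [hA, Matrix.mul_zero, Matrix.zero_mul, neg_zero]

variable [DecidableEq m]

theorem eq_zero_of_isotropic (e : m ⊕ m ≃ n) (hJ : IsUnit J.det) (hD : IsUnit (Dᵀ * D).det)
    (hiso : Dᵀ * J * D = 0) {X : Matrix n p R} (h₁ : Dᵀ * X = 0) (h₂ : Dᵀ * J * X = 0) :
    X = 0 := by
  -- `P Q` is block upper triangular with diagonal blocks `Dᵀ D`, and `e` turns the resulting
  -- right inverse of `P` into a left inverse
  set P := fromRows Dᵀ (Dᵀ * J)
  set Q := fromCols D (J⁻¹ * D)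
  have hPQ : IsUnit (P * Q).det := by
    rw [fromRows_mul_fromCols, hiso, Matrix.mul_assoc, mul_nonsing_inv_cancel_left _ _ hJ,
      det_fromBlocks_zero₂₁]
    exact hD.mul hD
  have hQP : Q * (P * Q)⁻¹ * P = 1 :=
    (mul_eq_one_comm_of_equiv e).mp (by rw [← Matrix.mul_assoc, mul_nonsing_inv _ hPQ])
  have hPX : P * X = 0 := by rw [fromRows_mul, h₁, h₂, fromRows_zero]
  calc X = Q * (P * Q)⁻¹ * P * X := by rw [hQP, Matrix.one_mul]
    _ = 0 := by rw [Matrix.mul_assoc, hPX, Matrix.mul_zero]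

theorem mul_gram_inv_mul_eq_self_of_isotropic (e : m ⊕ m ≃ n) (hJ : IsUnit J.det)
    (hD : IsUnit (Dᵀ * D).det) (hiso : Dᵀ * J * D = 0) {E : Matrix n p R}
    (hE : Dᵀ * J * E = 0) : D * ((Dᵀ * D)⁻¹ * (Dᵀ * E)) = E := by
  refine (sub_eq_zero.mp (eq_zero_of_isotropic e hJ hD hiso ?_ ?_)).symm
  · rw [Matrix.mul_sub, ← Matrix.mul_assoc, mul_nonsing_inv_cancel_left _ _ hD, sub_self]
  · rw [Matrix.mul_sub, hE, ← Matrix.mul_assoc, hiso, Matrix.zero_mul, sub_zero]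

end Isotropic

section InvariantTorus

variable {ℓ : ℕ} {ω θ : Fin ℓ → ℝ}

theorem differentiableAt_jacR_apply {m : ℕ} {K : (Fin ℓ → ℝ) → Fin m → ℝ}
    (hK : ContDiffAt ℝ 2 K θ) (i : Fin m) (a : Fin ℓ) :
    DifferentiableAt ℝ (fun θ => jacR K θ i a) θ :=
  differentiableAt_pi.1 (hK.differentiableAt_fderiv.clm_apply (differentiableAt_const _)) i

theorem matDirDeriv_jacR_of_invariant {m : ℕ} {B : Matrix (Fin m) (Fin m) ℝ}
    {H : (Fin m → ℝ) → ℝ} {K : (Fin ℓ → ℝ) → Fin m → ℝ} (hH : ContDiffAt ℝ 2 H (K θ))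
    (hK : ContDiffAt ℝ 2 K θ) (hinv : ∀ θ, fderiv ℝ K θ ω = B *ᵥ gradR H (K θ)) :
    matDirDeriv ω (jacR K) θ = B * hessR H (K θ) * jacR K θ := by
  have hgrad := differentiableAt_gradR hH.differentiableAt_fderiv
  have hdK : DifferentiableAt ℝ K θ := hK.differentiableAt (by norm_num)
  rw [matDirDeriv_jacR hK, funext hinv,
    jacR_mulVec B (f := fun θ => gradR H (K θ)) (hgrad.comp θ hdK), jacR_comp hgrad hdK,
    jacR_gradR hH.differentiableAt_fderiv, hessR_transpose hH, Matrix.mul_assoc]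

variable {J : Matrix (Fin (2 * ℓ)) (Fin (2 * ℓ)) ℝ} {K : (Fin ℓ → ℝ) → Fin (2 * ℓ) → ℝ}

theorem differentiableAt_jacR_mul_Nmat_apply (hK : ContDiffAt ℝ 2 K θ)
    (hGram : IsUnit ((jacR K θ)ᵀ * jacR K θ).det) (i : Fin (2 * ℓ)) (a : Fin ℓ) :
    DifferentiableAt ℝ (fun θ => (jacR K θ * Nmat K θ) i a) θ :=
  have hD := differentiableAt_jacR_apply hK
  .matrix_mul_apply hD (.matrix_inv_apply (.matrix_mul_apply (fun a i => hD i a) hD) hGram) i a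

theorem transpose_jacR_mul_matDirDeriv_jacR_mul_Nmat (hK : ContDiffAt ℝ 2 K θ)
    (hGram : ∀ θ, IsUnit ((jacR K θ)ᵀ * jacR K θ).det) :
    (jacR K θ)ᵀ * matDirDeriv ω (fun θ => jacR K θ * Nmat K θ) θ
      = -((matDirDeriv ω (jacR K) θ)ᵀ * (jacR K θ * Nmat K θ)) := by
  have hone : (fun θ => (jacR K θ)ᵀ * (jacR K θ * Nmat K θ)) = fun _ => 1 :=
    funext fun θ => by rw [← Matrix.mul_assoc]; exact mul_nonsing_inv _ (hGram θ)
  have h := matDirDeriv_mul (ω := ω) (A := fun θ => (jacR K θ)ᵀ)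
    (fun a i => differentiableAt_jacR_apply hK i a)
    (differentiableAt_jacR_mul_Nmat_apply hK (hGram θ))
  rw [hone, matDirDeriv_const] at h
  exact eq_neg_of_add_eq_zero_right h.symm

theorem matDirDeriv_Mmat (hK : ContDiffAt ℝ 2 K θ)
    (hGram : IsUnit ((jacR K θ)ᵀ * jacR K θ).det) :
    matDirDeriv ω (Mmat J K) θ = fromCols (matDirDeriv ω (jacR K) θ)
      (J⁻¹ * matDirDeriv ω (fun θ => jacR K θ * Nmat K θ) θ) := by
  have hM : Mmat J K = fun θ => fromCols (jacR K θ) (J⁻¹ * (jacR K θ * Nmat K θ)) :=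
    funext fun θ => by rw [Mmat, Matrix.mul_assoc]
  rw [hM, matDirDeriv_fromCols,
    matDirDeriv_const_mul _ (differentiableAt_jacR_mul_Nmat_apply hK hGram)]

theorem transpose_jacR_mul_J_mul_eq_zero {H : (Fin (2 * ℓ) → ℝ) → ℝ} (hJ : IsUnit J.det)
    (hJanti : Jᵀ = -J) (hH : ContDiffAt ℝ 2 H (K θ)) (hK : ContDiffAt ℝ 2 K θ)
    (hinv : ∀ θ, fderiv ℝ K θ ω = J⁻¹ *ᵥ gradR H (K θ))
    (hGram : ∀ θ, IsUnit ((jacR K θ)ᵀ * jacR K θ).det) :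
    (jacR K θ)ᵀ * J * (J⁻¹ * matDirDeriv ω (fun θ => jacR K θ * Nmat K θ) θ
      - Amat J H K θ * (J⁻¹ * jacR K θ * Nmat K θ)) = 0 := by
  refine transpose_mul_mul_sub_mul_eq_zero hJ
    (transpose_mul_add_mul_eq_zero hJ hJanti (hessR_transpose hH)) ?_
  rw [transpose_jacR_mul_matDirDeriv_jacR_mul_Nmat hK hGram,
    matDirDeriv_jacR_of_invariant hH hK hinv]
  rfl

end InvariantTorus

theorem automatic_reducibility_general
    (ℓ : ℕ) (ω : Fin ℓ → ℝ)
    (J : Matrix (Fin (2 * ℓ)) (Fin (2 * ℓ)) ℝ)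
    (hJdet : IsUnit J.det) (hJanti : Jᵀ = -J)
    (H : (Fin (2 * ℓ) → ℝ) → ℝ) (hH : ContDiff ℝ 2 H)
    (K : (Fin ℓ → ℝ) → Fin (2 * ℓ) → ℝ) (hK : ContDiff ℝ 2 K)
    (hinv : ∀ θ, fderiv ℝ K θ ω = J⁻¹.mulVec (gradR H (K θ)))
    (hGram : ∀ θ, IsUnit ((jacR K θ)ᵀ * jacR K θ).det)
    (hiso : ∀ θ, (jacR K θ)ᵀ * J * jacR K θ = 0) :
    ∀ θ : Fin ℓ → ℝ,
      matDirDeriv ω (Mmat J K) θ - Amat J H K θ * Mmat J K θ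
        = Mmat J K θ * Matrix.fromBlocks 0 (Smat ω J H K θ) 0 0 := by
  intro θ
  have hE := transpose_jacR_mul_J_mul_eq_zero (θ := θ) hJdet hJanti hH.contDiffAt
    hK.contDiffAt hinv hGram
  rw [matDirDeriv_Mmat hK.contDiffAt (hGram θ), matDirDeriv_jacR_of_invariant hH.contDiffAt
    hK.contDiffAt hinv, Mmat, mul_fromCols, fromCols_sub_fromCols]
  -- the right-hand side's product elaborates through the `CStarMatrix` instance, so no `rw`
  refine .trans ?_ (fromCols_mul_fromBlocks_zero _ _ _).symm
  congr 1
  · rw [Amat, sub_self]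
  · refine (mul_gram_inv_mul_eq_self_of_isotropic (finSumFinEquiv.trans (finCongr
      (two_mul ℓ).symm)) hJdet (hGram θ) (hiso θ) hE).symm.trans ?_
    simp only [Smat, Nmat, Matrix.mul_assoc]

/-- Automatic reducibility (Lemma `normalization`): along an exactly invariant isotropic
torus `K` with frequency `ω`, the frame `M = [DK, J⁻¹DK N]` reduces the linearized
Hamiltonian vector field to upper triangular block form:
`∂_ω M − A M = M [[0, S],[0, 0]]`. -/
theorem automatic_reducibility
    (ℓ : ℕ) (hℓ : 1 ≤ ℓ) (ω : Fin ℓ → ℝ)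
    (J : Matrix (Fin (2 * ℓ)) (Fin (2 * ℓ)) ℝ)
    (hJdet : IsUnit J.det) (hJanti : Jᵀ = -J)
    (H : (Fin (2 * ℓ) → ℝ) → ℝ) (hH : ContDiff ℝ 2 H)
    (K : (Fin ℓ → ℝ) → Fin (2 * ℓ) → ℝ) (hK : ContDiff ℝ 2 K)
    (hKper : ∀ (θ : Fin ℓ → ℝ) (k : Fin ℓ → ℤ), K (θ + fun i => (k i : ℝ)) = K θ)
    (hinv : ∀ θ, fderiv ℝ K θ ω = J⁻¹.mulVec (gradR H (K θ)))
    (hGram : ∀ θ, IsUnit ((jacR K θ)ᵀ * jacR K θ).det)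
    (hiso : ∀ θ, (jacR K θ)ᵀ * J * jacR K θ = 0) :
    ∀ θ : Fin ℓ → ℝ,
      matDirDeriv ω (Mmat J K) θ - Amat J H K θ * Mmat J K θ
        = Mmat J K θ * Matrix.fromBlocks 0 (Smat ω J H K θ) 0 0 :=
  automatic_reducibility_general ℓ ω J hJdet hJanti H hH K hK hinv hGram hiso
end
end

section
/- For every m>5/2 there exists a constant C>0 such that for every ρ≥0 and every sequence f:ℤ→ℂ with ∥f∥_{ρ,m}<∞, one has Σ_{k∈ℤ} 16π⁴k⁴ e^{4πρ|k|}(|k|^{2(m−2)}+1) |(f⋆f)(k)|² ≤ C ∥f∥⁴_{ρ,m}, where (f⋆f)(k)=Σ_{j∈ℤ}f(j)f(k−j). Equivalently: the map u ↦ ∂ₓ²(u²) is a bounded quadratic map from H^{ρ,m}(𝕋) to H^{ρ,m−2}(𝕋), i.e. ∥∂ₓ²(u²)∥_{ρ,m−2} ≤ C∥u∥²_{ρ,m}. -/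
open Real ENNReal

noncomputable section

/-- The Fourier-side weight `e^{4πρ|k|}(|k|^{2m}+1)` of the space `H^{ρ,m}(𝕋)`. -/
def wgt (ρ m : ℝ) (k : ℤ) : ℝ :=
  Real.exp (4 * π * ρ * |(k : ℝ)|) * (|(k : ℝ)| ^ (2 * m) + 1)

/-- The squared `H^{ρ,m}` norm of a sequence of Fourier coefficients. -/
def seqNormSq (ρ m : ℝ) (f : ℤ → ℂ) : ℝ :=
  ∑' k : ℤ, ‖f k‖ ^ 2 * wgt ρ m k

def eW (ρ : ℝ) (k : ℤ) : ℝ := Real.exp (2 * π * ρ * |(k : ℝ)|)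

/-- polynomial half-weight -/
def pW (m : ℝ) (k : ℤ) : ℝ := |(k : ℝ)| ^ m + 1

lemma eW_pos (ρ : ℝ) (k : ℤ) : 0 < eW ρ k := Real.exp_pos _

lemma one_le_eW {ρ : ℝ} (hρ : 0 ≤ ρ) (k : ℤ) : 1 ≤ eW ρ k := by
  rw [eW, ← Real.exp_zero]
  exact Real.exp_le_exp.mpr (by positivity)

lemma pW_pos (m : ℝ) (k : ℤ) : 0 < pW m k := by
  have := Real.rpow_nonneg (abs_nonneg ((k : ℝ))) m
  simp only [pW]; linarith

lemma one_le_pW (m : ℝ) (k : ℤ) : 1 ≤ pW m k := by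
  have := Real.rpow_nonneg (abs_nonneg ((k : ℝ))) m
  simp only [pW]; linarith

lemma eW_sq (ρ : ℝ) (k : ℤ) : eW ρ k ^ 2 = Real.exp (4 * π * ρ * |(k : ℝ)|) := by
  rw [eW, sq, ← Real.exp_add]; ring_nf

lemma rpow_two_mul (x : ℝ) (hx : 0 ≤ x) (m : ℝ) : x ^ (2 * m) = (x ^ m) ^ 2 := by
  rw [show (2 : ℝ) * m = m * 2 by ring, Real.rpow_mul hx, ← Real.rpow_natCast (x ^ m) 2]
  norm_num

lemma wgt_nonneg (ρ m : ℝ) (k : ℤ) : 0 ≤ wgt ρ m k := by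
  have := Real.rpow_nonneg (abs_nonneg ((k : ℝ))) (2 * m)
  have := Real.exp_pos (4 * π * ρ * |(k : ℝ)|)
  rw [wgt]; positivity

lemma wgt_le_sq (ρ m : ℝ) (k : ℤ) : wgt ρ m k ≤ (eW ρ k * pW m k) ^ 2 := by
  rw [mul_pow, eW_sq, wgt, pW]
  have h1 : 0 < Real.exp (4 * π * ρ * |(k : ℝ)|) := Real.exp_pos _
  have h2 : 0 ≤ |(k : ℝ)| ^ m := Real.rpow_nonneg (abs_nonneg _) m
  have h3 : |(k : ℝ)| ^ (2 * m) = (|(k : ℝ)| ^ m) ^ 2 := rpow_two_mul _ (abs_nonneg _) m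
  nlinarith [sq_nonneg (|(k : ℝ)| ^ m)]

lemma sq_le_two_wgt (ρ m : ℝ) (k : ℤ) : (eW ρ k * pW m k) ^ 2 ≤ 2 * wgt ρ m k := by
  rw [mul_pow, eW_sq, wgt, pW]
  have h1 : 0 < Real.exp (4 * π * ρ * |(k : ℝ)|) := Real.exp_pos _
  have h2 : 0 ≤ |(k : ℝ)| ^ m := Real.rpow_nonneg (abs_nonneg _) m
  have h3 : |(k : ℝ)| ^ (2 * m) = (|(k : ℝ)| ^ m) ^ 2 := rpow_two_mul _ (abs_nonneg _) m
  nlinarith [sq_nonneg (|(k : ℝ)| ^ m - 1)]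

lemma weight_shift {m : ℝ} (hm : 2 ≤ m) (ρ : ℝ) (k : ℤ) :
    16 * π ^ 4 * (k : ℝ) ^ 4 * wgt ρ (m - 2) k ≤ 32 * π ^ 4 * wgt ρ m k := by
  have hπ : (0 : ℝ) < π ^ 4 := by positivity
  have he : 0 < Real.exp (4 * π * ρ * |(k : ℝ)|) := Real.exp_pos _
  have key : (k : ℝ) ^ 4 * (|(k : ℝ)| ^ (2 * (m - 2)) + 1) ≤ 2 * (|(k : ℝ)| ^ (2 * m) + 1) := by
    rcases eq_or_ne k 0 with rfl | hk
    · have : ((0 : ℤ) : ℝ) = 0 := by norm_num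
      rw [this]
      have h2m : (0:ℝ) ≤ |(0:ℝ)| ^ (2 * m) := Real.rpow_nonneg (abs_nonneg _) _
      nlinarith [Real.rpow_nonneg (abs_nonneg ((0:ℝ))) (2 * (m - 2))]
    · have h1 : (1 : ℝ) ≤ |(k : ℝ)| := by
        have := Int.one_le_abs (by exact_mod_cast hk : k ≠ 0)
        calc (1:ℝ) ≤ |(k : ℤ)| := by exact_mod_cast this
        _ = |(k : ℝ)| := by push_cast [Int.cast_abs]; ring
      have hpos : (0 : ℝ) < |(k : ℝ)| := lt_of_lt_of_le one_pos h1
      have hk4 : (k : ℝ) ^ 4 = |(k : ℝ)| ^ ((4 : ℕ) : ℝ) := by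
        rw [Real.rpow_natCast]
        rw [show ((4:ℕ)) = 4 from rfl, ← abs_pow, abs_of_nonneg (by positivity)]
      have hmul : |(k : ℝ)| ^ ((4:ℕ):ℝ) * |(k : ℝ)| ^ (2 * (m - 2)) = |(k : ℝ)| ^ (2 * m) := by
        rw [← Real.rpow_add hpos]; norm_num; ring_nf
      have hle : |(k : ℝ)| ^ ((4:ℕ):ℝ) ≤ |(k : ℝ)| ^ (2 * m) :=
        Real.rpow_le_rpow_of_exponent_le h1 (by push_cast; linarith)
      calc (k : ℝ) ^ 4 * (|(k : ℝ)| ^ (2 * (m - 2)) + 1)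
          = |(k : ℝ)| ^ ((4:ℕ):ℝ) * |(k : ℝ)| ^ (2 * (m - 2)) + |(k : ℝ)| ^ ((4:ℕ):ℝ) := by
            rw [hk4]; ring
        _ = |(k : ℝ)| ^ (2 * m) + |(k : ℝ)| ^ ((4:ℕ):ℝ) := by rw [hmul]
        _ ≤ |(k : ℝ)| ^ (2 * m) + |(k : ℝ)| ^ (2 * m) := by linarith
        _ ≤ 2 * (|(k : ℝ)| ^ (2 * m) + 1) := by linarith
  calc 16 * π ^ 4 * (k : ℝ) ^ 4 * wgt ρ (m - 2) k
      = 16 * π ^ 4 * Real.exp (4 * π * ρ * |(k : ℝ)|) *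
          ((k : ℝ) ^ 4 * (|(k : ℝ)| ^ (2 * (m - 2)) + 1)) := by rw [wgt]; ring
    _ ≤ 16 * π ^ 4 * Real.exp (4 * π * ρ * |(k : ℝ)|) * (2 * (|(k : ℝ)| ^ (2 * m) + 1)) := by
        apply mul_le_mul_of_nonneg_left key (by positivity)
    _ = 32 * π ^ 4 * wgt ρ m k := by rw [wgt]; ring
lemma abs_tri (k j : ℤ) : |(k : ℝ)| ≤ |(j : ℝ)| + |((k - j : ℤ) : ℝ)| := by
  push_cast
  calc |(k : ℝ)| = |(j : ℝ) + ((k : ℝ) - j)| := by ring_nf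
    _ ≤ |(j : ℝ)| + |(k : ℝ) - j| := abs_add_le _ _

lemma eW_tri {ρ : ℝ} (hρ : 0 ≤ ρ) (k j : ℤ) : eW ρ k ≤ eW ρ j * eW ρ (k - j) := by
  rw [eW, eW, eW, ← Real.exp_add]
  apply Real.exp_le_exp.mpr
  have h0 : (0:ℝ) ≤ 2 * π * ρ := by positivity
  nlinarith [mul_le_mul_of_nonneg_left (abs_tri k j) h0]

lemma pW_tri {m : ℝ} (hm : 0 ≤ m) (k j : ℤ) :
    pW m k ≤ 2 ^ m * (pW m j + pW m (k - j)) := by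
  set x := |(j : ℝ)| with hx
  set y := |((k - j : ℤ) : ℝ)| with hy
  have hx0 : 0 ≤ x := abs_nonneg _
  have hy0 : 0 ≤ y := abs_nonneg _
  have h2m : (1 : ℝ) ≤ 2 ^ m := by
    rw [← Real.rpow_zero 2]
    exact Real.rpow_le_rpow_of_exponent_le one_le_two hm
  have hxm : 0 ≤ x ^ m := Real.rpow_nonneg hx0 m
  have hym : 0 ≤ y ^ m := Real.rpow_nonneg hy0 m
  have key : |(k : ℝ)| ^ m ≤ 2 ^ m * (x ^ m + y ^ m) := by
    have h1 : |(k : ℝ)| ^ m ≤ (x + y) ^ m :=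
      Real.rpow_le_rpow (abs_nonneg _) (abs_tri k j) hm
    rcases le_total x y with h | h
    · have h2 : (x + y) ^ m ≤ (2 * y) ^ m :=
        Real.rpow_le_rpow (by linarith) (by linarith) hm
      have h3 : (2 * y) ^ m = 2 ^ m * y ^ m := Real.mul_rpow (by norm_num) hy0
      nlinarith
    · have h2 : (x + y) ^ m ≤ (2 * x) ^ m :=
        Real.rpow_le_rpow (by linarith) (by linarith) hm
      have h3 : (2 * x) ^ m = 2 ^ m * x ^ m := Real.mul_rpow (by norm_num) hx0
      nlinarith
  simp only [pW, ← hx, ← hy]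
  nlinarith

/-- combined pointwise key inequality -/
lemma key_pt {ρ m : ℝ} (hρ : 0 ≤ ρ) (hm : 0 ≤ m) (k j : ℤ) {x y : ℝ}
    (hx : 0 ≤ x) (hy : 0 ≤ y) :
    eW ρ k * pW m k * (x * y) ≤
      2 ^ m * ((x * (eW ρ j * pW m j)) * (y * eW ρ (k - j)) +
        (x * eW ρ j) * (y * (eW ρ (k - j) * pW m (k - j)))) := by
  have h1 := eW_tri hρ k j
  have h2 := pW_tri hm k j
  have he1 := (Real.exp_pos (2 * π * ρ * |(j : ℝ)|)).le
  have he2 := (Real.exp_pos (2 * π * ρ * |((k - j : ℤ) : ℝ)|)).le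
  have hpk : 0 ≤ pW m k := by
    have := Real.rpow_nonneg (abs_nonneg ((k:ℝ))) m; simp only [pW]; linarith
  have hpj : 0 ≤ pW m j := by
    have := Real.rpow_nonneg (abs_nonneg ((j:ℝ))) m; simp only [pW]; linarith
  have hpkj : 0 ≤ pW m (k - j) := by
    have := Real.rpow_nonneg (abs_nonneg (((k - j : ℤ):ℝ))) m; simp only [pW]; linarith
  have hek : 0 ≤ eW ρ k := (Real.exp_pos _).le
  have step : eW ρ k * pW m k ≤ (eW ρ j * eW ρ (k - j)) * (2 ^ m * (pW m j + pW m (k - j))) := by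
    apply mul_le_mul h1 h2 hpk
    have : 0 ≤ eW ρ j := (Real.exp_pos _).le
    have : 0 ≤ eW ρ (k - j) := (Real.exp_pos _).le
    positivity
  calc eW ρ k * pW m k * (x * y)
      ≤ (eW ρ j * eW ρ (k - j)) * (2 ^ m * (pW m j + pW m (k - j))) * (x * y) :=
        mul_le_mul_of_nonneg_right step (by positivity)
    _ = 2 ^ m * ((x * (eW ρ j * pW m j)) * (y * eW ρ (k - j)) +
        (x * eW ρ j) * (y * (eW ρ (k - j) * pW m (k - j)))) := by rw [eW, eW]; ring

lemma ennreal_mul_le_sq_add_sq (u v : ℝ≥0∞) : u * v ≤ u ^ 2 + v ^ 2 := by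
  rcases le_total u v with h | h
  · calc u * v ≤ v * v := mul_le_mul_left h v
      _ = v ^ 2 := (sq v).symm
      _ ≤ u ^ 2 + v ^ 2 := le_add_self
  · calc u * v ≤ u * u := mul_le_mul_right h u
      _ = u ^ 2 := (sq u).symm
      _ ≤ u ^ 2 + v ^ 2 := le_self_add

lemma ennreal_tsum_mul_tsum (f g : ℤ → ℝ≥0∞) :
    (∑' k, f k) * (∑' j, g j) = ∑' k, ∑' j, f k * g j := by
  rw [← ENNReal.tsum_mul_right]
  exact tsum_congr fun k => ENNReal.tsum_mul_left.symm

/-- Cauchy–Schwarz with a crude constant 2. -/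
lemma ennreal_cs (A B : ℤ → ℝ≥0∞) :
    (∑' k, A k * B k) ^ 2 ≤ 2 * ((∑' k, A k ^ 2) * (∑' k, B k ^ 2)) := by
  have expand : (∑' k, A k * B k) ^ 2 = ∑' k, ∑' j, (A k * B k) * (A j * B j) := by
    rw [sq, ennreal_tsum_mul_tsum]
  rw [expand]
  have step : ∀ k j : ℤ, (A k * B k) * (A j * B j) ≤ (A k * B j) ^ 2 + (A j * B k) ^ 2 := by
    intro k j
    have : (A k * B k) * (A j * B j) = (A k * B j) * (A j * B k) := by ring
    rw [this]
    exact ennreal_mul_le_sq_add_sq _ _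
  calc ∑' k, ∑' j, (A k * B k) * (A j * B j)
      ≤ ∑' k, ∑' j, ((A k * B j) ^ 2 + (A j * B k) ^ 2) :=
        ENNReal.tsum_le_tsum fun k => ENNReal.tsum_le_tsum fun j => step k j
    _ = (∑' k, ∑' j, (A k * B j) ^ 2) + ∑' k, ∑' j, (A j * B k) ^ 2 := by
        rw [← ENNReal.tsum_add]
        exact tsum_congr fun k => ENNReal.tsum_add
    _ = (∑' k, ∑' j, A k ^ 2 * B j ^ 2) + ∑' k, ∑' j, A j ^ 2 * B k ^ 2 := by
        congr 1 <;> exact tsum_congr fun k => tsum_congr fun j => by rw [mul_pow]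
    _ = ((∑' k, A k ^ 2) * (∑' j, B j ^ 2)) + (∑' j, A j ^ 2) * (∑' k, B k ^ 2) := by
        congr 1
        · rw [ennreal_tsum_mul_tsum]
        · rw [ENNReal.tsum_comm, ennreal_tsum_mul_tsum]
    _ = 2 * ((∑' k, A k ^ 2) * (∑' k, B k ^ 2)) := by ring
  
lemma ennreal_shift (k : ℤ) (g : ℤ → ℝ≥0∞) : ∑' j, g (k - j) = ∑' j, g j :=
  (Equiv.subLeft k).tsum_eq g

/-- Young's inequality `‖A ⋆ B‖₂² ≤ 2 ‖A‖₂² ‖B‖₁²` in `ℝ≥0∞`. -/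
lemma ennreal_young (A B : ℤ → ℝ≥0∞) :
    ∑' k, (∑' j, A j * B (k - j)) ^ 2 ≤ 2 * ((∑' j, A j ^ 2) * (∑' j, B j) ^ 2) := by
  have pointwise : ∀ k : ℤ, (∑' j, A j * B (k - j)) ^ 2 ≤
      2 * ((∑' j, A j ^ 2 * B (k - j)) * (∑' j, B j)) := by
    intro k
    have expand : (∑' j, A j * B (k - j)) ^ 2 =
        ∑' j, ∑' i, (A j * B (k - j)) * (A i * B (k - i)) := by
      rw [sq, ennreal_tsum_mul_tsum]
    have step : ∀ j i : ℤ, (A j * B (k - j)) * (A i * B (k - i)) ≤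
        (A j ^ 2 + A i ^ 2) * (B (k - j) * B (k - i)) := by
      intro j i
      calc (A j * B (k - j)) * (A i * B (k - i))
          = (A j * A i) * (B (k - j) * B (k - i)) := by ring
        _ ≤ (A j ^ 2 + A i ^ 2) * (B (k - j) * B (k - i)) :=
            mul_le_mul_left (ennreal_mul_le_sq_add_sq _ _) _
    calc (∑' j, A j * B (k - j)) ^ 2
        ≤ ∑' j, ∑' i, (A j ^ 2 + A i ^ 2) * (B (k - j) * B (k - i)) := by
          rw [expand]
          exact ENNReal.tsum_le_tsum fun j => ENNReal.tsum_le_tsum fun i => step j i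
      _ = (∑' j, ∑' i, A j ^ 2 * B (k - j) * B (k - i))
            + ∑' j, ∑' i, A i ^ 2 * B (k - i) * B (k - j) := by
          rw [← ENNReal.tsum_add]
          refine tsum_congr fun j => ?_
          rw [← ENNReal.tsum_add]
          exact tsum_congr fun i => by ring
      _ = 2 * ((∑' j, A j ^ 2 * B (k - j)) * (∑' j, B j)) := by
          have e1 : ∑' j, ∑' i, A j ^ 2 * B (k - j) * B (k - i)
              = (∑' j, A j ^ 2 * B (k - j)) * (∑' i, B (k - i)) := by
            rw [ennreal_tsum_mul_tsum]
          have e2 : ∑' j, ∑' i, A i ^ 2 * B (k - i) * B (k - j)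
              = (∑' j, A j ^ 2 * B (k - j)) * (∑' i, B (k - i)) := by
            rw [ENNReal.tsum_comm (f := fun j i => A i ^ 2 * B (k - i) * B (k - j)),
              ennreal_tsum_mul_tsum]
          rw [e1, e2, ennreal_shift k B]
          ring
  calc ∑' k, (∑' j, A j * B (k - j)) ^ 2
      ≤ ∑' k, 2 * ((∑' j, A j ^ 2 * B (k - j)) * (∑' j, B j)) :=
        ENNReal.tsum_le_tsum pointwise
    _ = 2 * ((∑' k, ∑' j, A j ^ 2 * B (k - j)) * (∑' j, B j)) := by
        rw [ENNReal.tsum_mul_left, ENNReal.tsum_mul_right]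
    _ = 2 * ((∑' j, A j ^ 2) * (∑' j, B j) ^ 2) := by
        have : ∑' k, ∑' j, A j ^ 2 * B (k - j) = (∑' j, A j ^ 2) * (∑' j, B j) := by
          rw [ENNReal.tsum_comm (f := fun k j => A j ^ 2 * B (k - j))]
          calc ∑' j, ∑' k, A j ^ 2 * B (k - j)
              = ∑' j, A j ^ 2 * ∑' k, B (k - j) := by
                exact tsum_congr fun j => ENNReal.tsum_mul_left
            _ = ∑' j, A j ^ 2 * ∑' k, B k := by
                refine tsum_congr fun j => ?_
                congr 1
                exact (Equiv.subRight j).tsum_eq B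
            _ = (∑' j, A j ^ 2) * (∑' j, B j) := ENNReal.tsum_mul_right
        rw [this]; ring
lemma summable_of_tsum_ofReal_ne_top {g : ℤ → ℝ} (hg : ∀ k, 0 ≤ g k)
    (h : (∑' k, ENNReal.ofReal (g k)) ≠ ⊤) : Summable g := by
  have h2 : Summable fun k => (g k).toNNReal := by
    rw [← ENNReal.tsum_coe_ne_top_iff_summable]
    exact h
  have h3 := NNReal.summable_coe.mpr h2
  exact h3.congr fun k => Real.coe_toNNReal _ (hg k)

lemma summable_pw_inv_sq {m : ℝ} (hm : 1 / 2 < m) :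
    Summable fun j : ℤ => ((pW m j)⁻¹) ^ 2 := by
  have hcomp : Summable fun j : ℤ => |(j : ℝ)| ^ (-(2 * m)) + (if j = 0 then (1:ℝ) else 0) := by
    refine (summable_abs_int_rpow (by linarith)).add ?_
    exact summable_of_ne_finset_zero (s := {0}) (by intro b hb; simp at hb ⊢; exact hb)
  refine hcomp.of_nonneg_of_le (fun j => by positivity) fun j => ?_
  rcases eq_or_ne j 0 with rfl | hj
  · simp only [if_pos rfl]
    have : pW m 0 = 1 := by
      simp [pW]
      exact Real.zero_rpow (by linarith)
    rw [this]
    norm_num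
    positivity
  · have h1 : (1 : ℝ) ≤ |(j : ℝ)| := by
      have := Int.one_le_abs (by exact_mod_cast hj : j ≠ 0)
      calc (1:ℝ) ≤ |(j : ℤ)| := by exact_mod_cast this
      _ = |(j : ℝ)| := by push_cast [Int.cast_abs]; ring
    have hpos : (0:ℝ) < |(j : ℝ)| ^ m := Real.rpow_pos_of_pos (by linarith) m
    have key : ((pW m j)⁻¹) ^ 2 ≤ |(j : ℝ)| ^ (-(2 * m)) := by
      rw [Real.rpow_neg (abs_nonneg _), rpow_two_mul _ (abs_nonneg _) m]
      rw [← inv_pow]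
      have hp : (0:ℝ) < pW m j := by simp only [pW]; linarith
      apply pow_le_pow_left₀ (inv_nonneg.mpr hp.le)
      apply inv_anti₀ hpos
      simp only [pW]; linarith
    simp only [if_neg hj, add_zero]
    exact key

/-- Fourier-side boundedness of the Boussinesq nonlinearity `u ↦ ∂ₓ²(u²)` from
`H^{ρ,m}(𝕋)` to `H^{ρ,m-2}(𝕋)` for `m > 5/2`:
`Σ_k 16π⁴k⁴ e^{4πρ|k|}(|k|^{2(m−2)}+1) |(f⋆f)(k)|² ≤ C ‖f‖⁴_{ρ,m}`,
with `C = C(m)` uniform in `ρ ≥ 0`. -/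
theorem boussinesq_nonlinearity_bounded (m : ℝ) (hm : 5 / 2 < m) :
    ∃ C > 0, ∀ ρ : ℝ, 0 ≤ ρ → ∀ f : ℤ → ℂ,
      Summable (fun k : ℤ => ‖f k‖ ^ 2 * wgt ρ m k) →
      (∀ k : ℤ, Summable (fun j : ℤ => ‖f j * f (k - j)‖)) ∧
      Summable (fun k : ℤ =>
        16 * π ^ 4 * (k : ℝ) ^ 4 * wgt ρ (m - 2) k * ‖∑' j : ℤ, f j * f (k - j)‖ ^ 2) ∧
      (∑' k : ℤ,
        16 * π ^ 4 * (k : ℝ) ^ 4 * wgt ρ (m - 2) k * ‖∑' j : ℤ, f j * f (k - j)‖ ^ 2)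
        ≤ C * seqNormSq ρ m f ^ 2 := by
  have hm0 : (0 : ℝ) ≤ m := by linarith
  have hm2 : (2 : ℝ) ≤ m := by linarith
  -- the constant
  set Km : ℝ := ∑' j : ℤ, ((pW m j)⁻¹) ^ 2 with hKm_def
  have hKm_sum : Summable fun j : ℤ => ((pW m j)⁻¹) ^ 2 := summable_pw_inv_sq (by linarith)
  have hKm_pos : 0 < Km := by
    have h0 : (0 : ℝ) < ((pW m 0)⁻¹) ^ 2 := by
      have := pW_pos m 0; positivity
    exact lt_of_lt_of_le h0 (Summable.le_tsum hKm_sum 0 fun j _ => by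
      have := pW_pos m j; positivity)
  have h2m_pos : (0 : ℝ) < (2 : ℝ) ^ m := Real.rpow_pos_of_pos two_pos m
  refine ⟨2048 * π ^ 4 * ((2 : ℝ) ^ m) ^ 2 * Km, by positivity, fun ρ hρ f hf => ?_⟩
  -- ENNReal-valued sequences
  set a : ℤ → ℝ≥0∞ := fun j => ENNReal.ofReal (‖f j‖ * (eW ρ j * pW m j)) with ha_def
  set b : ℤ → ℝ≥0∞ := fun j => ENNReal.ofReal (‖f j‖ * eW ρ j) with hb_def
  set c : ℤ → ℝ≥0∞ := fun j => ENNReal.ofReal ((pW m j)⁻¹) with hc_def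
  set S : ℝ≥0∞ := ∑' k, ENNReal.ofReal (‖f k‖ ^ 2 * wgt ρ m k) with hS_def
  have hterm_nonneg : ∀ k : ℤ, 0 ≤ ‖f k‖ ^ 2 * wgt ρ m k := fun k =>
    mul_nonneg (by positivity) (wgt_nonneg ρ m k)
  have hS_eq : S = ENNReal.ofReal (seqNormSq ρ m f) :=
    (ENNReal.ofReal_tsum_of_nonneg hterm_nonneg hf).symm
  have hS_ne : S ≠ ⊤ := by rw [hS_eq]; exact ENNReal.ofReal_ne_top
  -- ℓ² bound on a
  have hSa : (∑' j, a j ^ 2) ≤ 2 * S := by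
    rw [hS_def, ← ENNReal.tsum_mul_left]
    refine ENNReal.tsum_le_tsum fun j => ?_
    have hx : (0 : ℝ) ≤ ‖f j‖ * (eW ρ j * pW m j) := by
      have := (eW_pos ρ j).le; have := (pW_pos m j).le; positivity
    rw [ha_def]
    rw [← ENNReal.ofReal_pow hx]
    have h2 : (2 : ℝ≥0∞) = ENNReal.ofReal 2 := by norm_num
    rw [h2, ← ENNReal.ofReal_mul (by norm_num)]
    apply ENNReal.ofReal_le_ofReal
    have hkey : (eW ρ j * pW m j) ^ 2 ≤ 2 * wgt ρ m j := sq_le_two_wgt ρ m j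
    calc (‖f j‖ * (eW ρ j * pW m j)) ^ 2 = ‖f j‖ ^ 2 * (eW ρ j * pW m j) ^ 2 := by ring
      _ ≤ ‖f j‖ ^ 2 * (2 * wgt ρ m j) := by nlinarith [sq_nonneg ‖f j‖]
      _ = 2 * (‖f j‖ ^ 2 * wgt ρ m j) := by ring
  have hSa_ne : (∑' j, a j ^ 2) ≠ ⊤ := by
    refine ne_top_of_le_ne_top ?_ hSa
    exact ENNReal.mul_ne_top (by norm_num) hS_ne
  -- b = a * c
  have hbac : ∀ j : ℤ, b j = a j * c j := by
    intro j
    rw [ha_def, hb_def, hc_def]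
    have hx : (0 : ℝ) ≤ ‖f j‖ * (eW ρ j * pW m j) := by
      have := (eW_pos ρ j).le; have := (pW_pos m j).le; positivity
    have hp : pW m j ≠ 0 := (pW_pos m j).ne'
    rw [← ENNReal.ofReal_mul hx]
    congr 1
    rw [mul_assoc, mul_assoc, mul_inv_cancel₀ hp, mul_one]
  -- ℓ¹ bound on b
  have hKc : (∑' j, c j ^ 2) = ENNReal.ofReal Km := by
    rw [hKm_def, ENNReal.ofReal_tsum_of_nonneg (fun j => by positivity) hKm_sum]
    exact tsum_congr fun j => by
      rw [hc_def, ← ENNReal.ofReal_pow (by have := pW_pos m j; positivity)]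
  have hNb : (∑' j, b j) ^ 2 ≤ 2 * ((∑' j, a j ^ 2) * ENNReal.ofReal Km) := by
    calc (∑' j, b j) ^ 2 = (∑' j, a j * c j) ^ 2 := by
          rw [tsum_congr hbac]
      _ ≤ 2 * ((∑' j, a j ^ 2) * (∑' j, c j ^ 2)) := ennreal_cs a c
      _ = 2 * ((∑' j, a j ^ 2) * ENNReal.ofReal Km) := by rw [hKc]
  -- Part 1 : summability of convolutions
  have hofr_prod : ∀ k j : ℤ, ENNReal.ofReal (‖f j‖ * ‖f (k - j)‖) ≤ a j * a (k - j) := by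
    intro k j
    rw [ha_def]
    rw [← ENNReal.ofReal_mul (by
      have := (eW_pos ρ j).le; have := (pW_pos m j).le; positivity)]
    apply ENNReal.ofReal_le_ofReal
    have h1 : 1 ≤ eW ρ j * pW m j := by
      nlinarith [one_le_eW hρ j, one_le_pW m j]
    have h2 : 1 ≤ eW ρ (k - j) * pW m (k - j) := by
      nlinarith [one_le_eW hρ (k - j), one_le_pW m (k - j)]
    have hn1 : (0:ℝ) ≤ ‖f j‖ := norm_nonneg _
    have hn2 : (0:ℝ) ≤ ‖f (k - j)‖ := norm_nonneg _
    calc ‖f j‖ * ‖f (k - j)‖ = (‖f j‖ * ‖f (k - j)‖) * 1 * 1 := by ring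
      _ ≤ (‖f j‖ * ‖f (k - j)‖) * (eW ρ j * pW m j) * (eW ρ (k - j) * pW m (k - j)) := by
          apply mul_le_mul _ h2 zero_le_one
          · positivity
          · exact mul_le_mul_of_nonneg_left h1 (mul_nonneg hn1 hn2)
      _ = (‖f j‖ * (eW ρ j * pW m j)) * (‖f (k - j)‖ * (eW ρ (k - j) * pW m (k - j))) := by
          ring
  have part1 : ∀ k : ℤ, Summable fun j : ℤ => ‖f j * f (k - j)‖ := by
    intro k
    apply summable_of_tsum_ofReal_ne_top (fun j => norm_nonneg _)
    have hle : (∑' j, ENNReal.ofReal ‖f j * f (k - j)‖) ≤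
        (∑' j, a j ^ 2) + (∑' j, a j ^ 2) := by
      calc (∑' j, ENNReal.ofReal ‖f j * f (k - j)‖)
          = ∑' j, ENNReal.ofReal (‖f j‖ * ‖f (k - j)‖) := by
            exact tsum_congr fun j => by rw [norm_mul]
        _ ≤ ∑' j, a j * a (k - j) := ENNReal.tsum_le_tsum fun j => hofr_prod k j
        _ ≤ ∑' j, (a j ^ 2 + a (k - j) ^ 2) :=
            ENNReal.tsum_le_tsum fun j => ennreal_mul_le_sq_add_sq _ _
        _ = (∑' j, a j ^ 2) + ∑' j, a (k - j) ^ 2 := ENNReal.tsum_add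
        _ = (∑' j, a j ^ 2) + (∑' j, a j ^ 2) := by
            rw [ennreal_shift k (fun j => a j ^ 2)]
    intro htop
    rw [htop] at hle
    exact (ENNReal.add_ne_top.mpr ⟨hSa_ne, hSa_ne⟩) (top_le_iff.mp hle)
  -- convolution and its majorant
  set D : ℤ → ℝ≥0∞ := fun k => ∑' j, ENNReal.ofReal (‖f j‖ * ‖f (k - j)‖) with hD_def
  have h_conv_le : ∀ k : ℤ, ENNReal.ofReal ‖∑' j : ℤ, f j * f (k - j)‖ ≤ D k := by
    intro k
    calc ENNReal.ofReal ‖∑' j : ℤ, f j * f (k - j)‖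
        ≤ ENNReal.ofReal (∑' j : ℤ, ‖f j * f (k - j)‖) :=
          ENNReal.ofReal_le_ofReal (norm_tsum_le_tsum_norm (part1 k))
      _ = ∑' j, ENNReal.ofReal ‖f j * f (k - j)‖ :=
          ENNReal.ofReal_tsum_of_nonneg (fun j => norm_nonneg _) (part1 k)
      _ = D k := tsum_congr fun j => by rw [norm_mul]
  set T : ℤ → ℝ≥0∞ := fun k => ∑' j, a j * b (k - j) with hT_def
  -- weighted convolution bound
  have h_wD : ∀ k : ℤ, ENNReal.ofReal (eW ρ k * pW m k) * D k ≤
      ENNReal.ofReal ((2:ℝ) ^ m) * (2 * T k) := by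
    intro k
    have hw0 : (0:ℝ) ≤ eW ρ k * pW m k := by
      have := (eW_pos ρ k).le; have := (pW_pos m k).le; positivity
    calc ENNReal.ofReal (eW ρ k * pW m k) * D k
        = ∑' j, ENNReal.ofReal (eW ρ k * pW m k * (‖f j‖ * ‖f (k - j)‖)) := by
          rw [hD_def, ← ENNReal.tsum_mul_left]
          exact tsum_congr fun j => by rw [← ENNReal.ofReal_mul hw0]
      _ ≤ ∑' j, (ENNReal.ofReal ((2:ℝ) ^ m) * (a j * b (k - j) + b j * a (k - j))) := by
          refine ENNReal.tsum_le_tsum fun j => ?_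
          have hkey := key_pt hρ hm0 k j (norm_nonneg (f j)) (norm_nonneg (f (k - j)))
          refine le_trans (ENNReal.ofReal_le_ofReal hkey) ?_
          rw [ENNReal.ofReal_mul (by positivity)]
          apply mul_le_mul_right
          rw [ENNReal.ofReal_add (by
              have := (eW_pos ρ j).le; have := (pW_pos m j).le
              have := (eW_pos ρ (k-j)).le; positivity)
            (by
              have := (eW_pos ρ j).le; have := (pW_pos m (k-j)).le
              have := (eW_pos ρ (k-j)).le; positivity)]
          apply add_le_add
          · rw [ha_def, hb_def, ENNReal.ofReal_mul (by
              have := (eW_pos ρ j).le; have := (pW_pos m j).le; positivity)]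
          · rw [ha_def, hb_def, ENNReal.ofReal_mul (by
              have := (eW_pos ρ j).le; positivity)]
      _ = ENNReal.ofReal ((2:ℝ) ^ m) * ((∑' j, a j * b (k - j)) + ∑' j, b j * a (k - j)) := by
          rw [ENNReal.tsum_mul_left, ENNReal.tsum_add]
      _ = ENNReal.ofReal ((2:ℝ) ^ m) * (2 * T k) := by
          have hswap : ∑' j, b j * a (k - j) = T k := by
            rw [hT_def]
            rw [← (Equiv.subLeft k).tsum_eq (fun j => b j * a (k - j))]
            simp only [Equiv.subLeft_apply, _root_.sub_sub_cancel]
            exact tsum_congr fun j => mul_comm _ _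
          rw [hswap, hT_def, two_mul]
  -- main pointwise bound
  set L : ℤ → ℝ := fun k =>
    16 * π ^ 4 * (k : ℝ) ^ 4 * wgt ρ (m - 2) k * ‖∑' j : ℤ, f j * f (k - j)‖ ^ 2 with hL_def
  have hL_nonneg : ∀ k : ℤ, 0 ≤ L k := by
    intro k
    rw [hL_def]
    have := wgt_nonneg ρ (m - 2) k
    have hk4 : (0:ℝ) ≤ (k:ℝ) ^ 4 := by positivity
    positivity
  set C1 : ℝ≥0∞ := ENNReal.ofReal (32 * π ^ 4) * (ENNReal.ofReal ((2:ℝ) ^ m) * 2) ^ 2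
    with hC1_def
  have h_main_pt : ∀ k : ℤ, ENNReal.ofReal (L k) ≤ C1 * T k ^ 2 := by
    intro k
    have hw16 : (0:ℝ) ≤ 16 * π ^ 4 * (k : ℝ) ^ 4 * wgt ρ (m - 2) k := by
      have := wgt_nonneg ρ (m - 2) k
      have hk4 : (0:ℝ) ≤ (k:ℝ) ^ 4 := by positivity
      positivity
    have hw0 : (0:ℝ) ≤ eW ρ k * pW m k := by
      have := (eW_pos ρ k).le; have := (pW_pos m k).le; positivity
    calc ENNReal.ofReal (L k)
        = ENNReal.ofReal (16 * π ^ 4 * (k : ℝ) ^ 4 * wgt ρ (m - 2) k) *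
            ENNReal.ofReal ‖∑' j : ℤ, f j * f (k - j)‖ ^ 2 := by
          rw [hL_def, ENNReal.ofReal_mul hw16,
            ENNReal.ofReal_pow (norm_nonneg _)]
      _ ≤ ENNReal.ofReal (32 * π ^ 4 * wgt ρ m k) * D k ^ 2 := by
          apply mul_le_mul'
          · exact ENNReal.ofReal_le_ofReal (weight_shift hm2 ρ k)
          · exact pow_le_pow_left' (h_conv_le k) 2
      _ = ENNReal.ofReal (32 * π ^ 4) * (ENNReal.ofReal (wgt ρ m k) * D k ^ 2) := by
          rw [show 32 * π ^ 4 * wgt ρ m k = (32 * π ^ 4) * wgt ρ m k from rfl,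
            ENNReal.ofReal_mul (by positivity), mul_assoc]
      _ ≤ ENNReal.ofReal (32 * π ^ 4) * ((ENNReal.ofReal (eW ρ k * pW m k) * D k) ^ 2) := by
          apply mul_le_mul_right
          rw [mul_pow]
          apply mul_le_mul_left
          rw [← ENNReal.ofReal_pow hw0]
          exact ENNReal.ofReal_le_ofReal (wgt_le_sq ρ m k)
      _ ≤ ENNReal.ofReal (32 * π ^ 4) * ((ENNReal.ofReal ((2:ℝ) ^ m) * (2 * T k)) ^ 2) := by
          apply mul_le_mul_right
          exact pow_le_pow_left' (h_wD k) 2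
      _ = C1 * T k ^ 2 := by rw [hC1_def]; ring
  -- summation
  have h_total : (∑' k, ENNReal.ofReal (L k)) ≤
      C1 * 16 * ENNReal.ofReal Km * S ^ 2 := by
    calc (∑' k, ENNReal.ofReal (L k))
        ≤ ∑' k, C1 * T k ^ 2 := ENNReal.tsum_le_tsum h_main_pt
      _ = C1 * ∑' k, T k ^ 2 := ENNReal.tsum_mul_left
      _ ≤ C1 * (2 * ((∑' j, a j ^ 2) * (∑' j, b j) ^ 2)) := by
          apply mul_le_mul_right
          exact ennreal_young a b
      _ ≤ C1 * (2 * ((∑' j, a j ^ 2) *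
            (2 * ((∑' j, a j ^ 2) * ENNReal.ofReal Km)))) := by
          apply mul_le_mul_right
          apply mul_le_mul_right
          exact mul_le_mul_right hNb _
      _ = C1 * 4 * ENNReal.ofReal Km * (∑' j, a j ^ 2) ^ 2 := by ring
      _ ≤ C1 * 4 * ENNReal.ofReal Km * (2 * S) ^ 2 := by
          apply mul_le_mul_right
          exact pow_le_pow_left' hSa 2
      _ = C1 * 16 * ENNReal.ofReal Km * S ^ 2 := by ring
  have hs0 : 0 ≤ seqNormSq ρ m f := tsum_nonneg hterm_nonneg
  have hC_eq : C1 * 16 * ENNReal.ofReal Km * S ^ 2 =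
      ENNReal.ofReal (2048 * π ^ 4 * ((2 : ℝ) ^ m) ^ 2 * Km * seqNormSq ρ m f ^ 2) := by
    have h32 : (0:ℝ) ≤ 32 * π ^ 4 := by positivity
    have h2m2 : (0:ℝ) ≤ (2:ℝ) ^ m * 2 := by positivity
    have e1 : ENNReal.ofReal ((2:ℝ) ^ m) * 2 = ENNReal.ofReal ((2:ℝ) ^ m * 2) := by
      rw [ENNReal.ofReal_mul h2m_pos.le]
      norm_num
    have e16 : (16 : ℝ≥0∞) = ENNReal.ofReal 16 := by norm_num
    rw [hC1_def, hS_eq, e1, e16,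
      ← ENNReal.ofReal_pow h2m2, ← ENNReal.ofReal_pow hs0,
      ← ENNReal.ofReal_mul h32,
      ← ENNReal.ofReal_mul (by positivity : (0:ℝ) ≤ 32 * π ^ 4 * ((2:ℝ) ^ m * 2) ^ 2),
      ← ENNReal.ofReal_mul (by positivity : (0:ℝ) ≤ 32 * π ^ 4 * ((2:ℝ) ^ m * 2) ^ 2 * 16),
      ← ENNReal.ofReal_mul
        (by positivity : (0:ℝ) ≤ 32 * π ^ 4 * ((2:ℝ) ^ m * 2) ^ 2 * 16 * Km)]
    congr 1
    ring
  have h_final : (∑' k, ENNReal.ofReal (L k)) ≤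
      ENNReal.ofReal (2048 * π ^ 4 * ((2 : ℝ) ^ m) ^ 2 * Km * seqNormSq ρ m f ^ 2) := by
    rw [← hC_eq]; exact h_total
  have hL_sum : Summable L :=
    summable_of_tsum_ofReal_ne_top hL_nonneg
      (ne_top_of_le_ne_top ENNReal.ofReal_ne_top h_final)
  refine ⟨part1, hL_sum, ?_⟩
  have heq : ENNReal.ofReal (∑' k, L k) = ∑' k, ENNReal.ofReal (L k) :=
    ENNReal.ofReal_tsum_of_nonneg hL_nonneg hL_sum
  have : ENNReal.ofReal (∑' k, L k) ≤
      ENNReal.ofReal (2048 * π ^ 4 * ((2 : ℝ) ^ m) ^ 2 * Km * seqNormSq ρ m f ^ 2) := by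
    rw [heq]; exact h_final
  have hfin := (ENNReal.ofReal_le_ofReal_iff (by positivity)).mp this
  calc (∑' k : ℤ,
        16 * π ^ 4 * (k : ℝ) ^ 4 * wgt ρ (m - 2) k * ‖∑' j : ℤ, f j * f (k - j)‖ ^ 2)
      = ∑' k, L k := rfl
    _ ≤ 2048 * π ^ 4 * ((2 : ℝ) ^ m) ^ 2 * Km * seqNormSq ρ m f ^ 2 := hfin
    _ = 2048 * π ^ 4 * ((2 : ℝ) ^ m) ^ 2 * Km * seqNormSq ρ m f ^ 2 := rfl
end
end

section
/- Let X and Y be Banach spaces with X continuously embedded in Y (so ∥x∥_Y ≤ c∥x∥_X for some c>0), let ℓ≥1 and ω∈ℝ^ℓ. Suppose given, for each θ∈ℝ^ℓ and each t>0, a bounded linear operator U_θ(t):Y→X, ℤ^ℓ-periodic in θ, jointly continuous in (θ,t) in operator norm for t>0, satisfying: (a) the cocycle property U_{θ+ωt}(t') U_θ(t) = U_θ(t+t') for all t,t'>0 (composition via the embedding X⊆Y); (b) the smoothing rate condition ∥U_θ(t)∥_{L(Y,X)} ≤ C_h e^{−βt} t^{−α} for all θ and t>0, with constants C_h>0, β>0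 and α∈(0,1). Let F:ℝ^ℓ→Y be continuous, ℤ^ℓ-periodic and bounded. Then: (i) for every θ the Bochner integral Δ(θ) = ∫₀^∞ U_{θ−ωτ}(τ) F(θ−ωτ) dτ converges in X and satisfies ∥Δ(θ)∥_X ≤ C_h β^{α−1} Γ(1−α) sup_{θ'}∥F(θ')∥_Y; (ii) Δ satisfies the Duhamel identity Δ(θ) = U_{θ−ωt}(t) Δ(θ−ωt) + ∫₀^t U_{θ−ωs}(s) F(θ−ωs) ds for every θ∈ℝ^ℓ and every t>0; (iii) Δ is the unique function ℝ^ℓ→X with sup_θ∥Δ(θ)∥_X<∞ satisfying the identity in (ii). -/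
/-!
The solution is the integral of the forcing transported by the cocycle along the backward orbit.
The rate bound dominates the integrand by `C_h sup‖F‖ τ^{−α} e^{−βτ}`, whose integral over
`(0, ∞)` is `β^{α−1} Γ(1−α)`. Splitting `∫₀^∞ = ∫₀^t + ∫_t^∞` and pulling the tail back along the
flow by the cocycle property gives the Duhamel identity. The difference of two bounded solutions
is transported by `U_{θ−ωt}(t)` for every `t > 0`, hence is at most a constant times
`t^{−α} e^{−βt} → 0`.
-/

open Real MeasureTheory Set Filter Topology

noncomputable section

section Kernel

variable {α β : ℝ}

theorem integrableOn_rpow_neg_mul_exp_neg_mul (hα : α < 1) (hβ : 0 < β) :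
    IntegrableOn (fun τ : ℝ => τ ^ (-α) * exp (-β * τ)) (Ioi 0) := by
  simpa using integrableOn_rpow_mul_exp_neg_mul_rpow (p := 1) (by linarith) one_pos hβ

theorem integral_rpow_neg_mul_exp_neg_mul (hα : α < 1) (hβ : 0 < β) :
    ∫ τ in Ioi (0 : ℝ), τ ^ (-α) * exp (-β * τ) = β ^ (α - 1) * Gamma (1 - α) := by
  have h := integral_rpow_mul_exp_neg_mul_Ioi (a := 1 - α) (by linarith) hβ
  rw [show 1 - α - 1 = -α by ring, one_div, inv_rpow hβ.le, ← rpow_neg hβ.le, neg_sub] at h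
  simpa only [neg_mul] using h

variable {X : Type*} [NormedAddCommGroup X] {g : ℝ → X} {C : ℝ}

theorem integrableOn_Ioi_of_norm_le_rpow_mul_exp (hα : α < 1) (hβ : 0 < β)
    (hg : ContinuousOn g (Ioi 0))
    (hle : ∀ τ ∈ Ioi (0 : ℝ), ‖g τ‖ ≤ C * (τ ^ (-α) * exp (-β * τ))) :
    IntegrableOn g (Ioi 0) :=
  ((integrableOn_rpow_neg_mul_exp_neg_mul hα hβ).const_mul C).mono'
    (hg.aestronglyMeasurable measurableSet_Ioi) ((ae_restrict_iff' measurableSet_Ioi).2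
      (Eventually.of_forall hle))

variable [NormedSpace ℝ X]

theorem norm_integral_Ioi_le_of_norm_le_rpow_mul_exp (hα : α < 1) (hβ : 0 < β)
    (hle : ∀ τ ∈ Ioi (0 : ℝ), ‖g τ‖ ≤ C * (τ ^ (-α) * exp (-β * τ))) :
    ‖∫ τ in Ioi 0, g τ‖ ≤ C * β ^ (α - 1) * Gamma (1 - α) := by
  calc ‖∫ τ in Ioi 0, g τ‖ ≤ ∫ τ in Ioi (0 : ℝ), C * (τ ^ (-α) * exp (-β * τ)) :=
        norm_integral_le_of_norm_le ((integrableOn_rpow_neg_mul_exp_neg_mul hα hβ).const_mul C)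
          ((ae_restrict_iff' measurableSet_Ioi).2 (Eventually.of_forall hle))
    _ = C * β ^ (α - 1) * Gamma (1 - α) := by
        rw [integral_const_mul, integral_rpow_neg_mul_exp_neg_mul hα hβ, mul_assoc]

end Kernel

section HalfLine

variable {X : Type*} [NormedAddCommGroup X] [NormedSpace ℝ X] {g : ℝ → X}

theorem setIntegral_Ioi_eq_integral_Ioc_add_integral_Ioi {μ : Measure ℝ} {a b : ℝ} (hab : a ≤ b)
    (hg : IntegrableOn g (Ioi a) μ) :
    ∫ x in Ioi a, g x ∂μ = (∫ x in Ioc a b, g x ∂μ) + ∫ x in Ioi b, g x ∂μ := by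
  rw [← setIntegral_union (Ioc_disjoint_Ioi le_rfl) measurableSet_Ioi
    (hg.mono_set Ioc_subset_Ioi_self) (hg.mono_set (Ioi_subset_Ioi hab)), Ioc_union_Ioi_eq_Ioi hab]

theorem setIntegral_Ioi_comp_add_right (a t : ℝ) :
    ∫ x in Ioi a, g (x + t) = ∫ x in Ioi (a + t), g x := by
  simpa using (measurePreserving_add_right volume t).setIntegral_preimage_emb
    (measurableEmbedding_addRight t) g (Ioi (a + t))

end HalfLine

section Cocycle

variable {E X Y : Type*} [AddCommGroup E] [Module ℝ E]
  [NormedAddCommGroup X] [NormedSpace ℝ X] [NormedAddCommGroup Y] [NormedSpace ℝ Y]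
  {ι : X →L[ℝ] Y} {ω : E} {U : E → ℝ → (Y →L[ℝ] X)} {F : E → Y}

def duhamelIntegrand (U : E → ℝ → (Y →L[ℝ] X)) (F : E → Y) (ω θ : E) (τ : ℝ) : X :=
  U (θ - τ • ω) τ (F (θ - τ • ω))

theorem continuousOn_duhamelIntegrand [TopologicalSpace E] [IsTopologicalAddGroup E]
    [ContinuousSMul ℝ E] (hU : ContinuousOn (fun p : E × ℝ => U p.1 p.2) {p | 0 < p.2})
    (hF : Continuous F) (θ : E) :
    ContinuousOn (duhamelIntegrand U F ω θ) (Ioi 0) := by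
  have hshift : Continuous fun τ : ℝ => θ - τ • ω := by fun_prop
  exact (hU.comp (hshift.prodMk continuous_id).continuousOn fun τ hτ => hτ).clm_apply
    (hF.comp hshift).continuousOn

theorem norm_duhamelIntegrand_le {Ch α β M : ℝ}
    (hrate : ∀ θ t, 0 < t → ‖U θ t‖ ≤ Ch * exp (-β * t) * t ^ (-α))
    (hM : ∀ θ, ‖F θ‖ ≤ M) (θ : E) :
    ∀ τ ∈ Ioi (0 : ℝ), ‖duhamelIntegrand U F ω θ τ‖ ≤ Ch * M * (τ ^ (-α) * exp (-β * τ)) :=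
  fun τ hτ => ((U _ τ).le_of_opNorm_le_of_le (hrate _ τ hτ) (hM _)).trans_eq (by ring)

theorem cocycle_apply_duhamelIntegrand
    (hcocycle : ∀ θ t t', 0 < t → 0 < t' → (U (θ + t • ω) t').comp (ι.comp (U θ t)) = U θ (t + t'))
    {θ : E} {t σ : ℝ} (ht : 0 < t) (hσ : 0 < σ) :
    U (θ - t • ω) t (ι (duhamelIntegrand U F ω (θ - t • ω) σ)) =
      duhamelIntegrand U F ω θ (σ + t) := by
  have hc := congrArg (· (F (θ - t • ω - σ • ω))) (hcocycle (θ - t • ω - σ • ω) σ t hσ ht)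
  simp only [sub_add_cancel, ContinuousLinearMap.comp_apply] at hc
  rw [duhamelIntegrand, hc, duhamelIntegrand, add_smul, sub_sub, add_comm (σ • ω)]

theorem integral_duhamelIntegrand_eq [CompleteSpace X]
    (hcocycle : ∀ θ t t', 0 < t → 0 < t' → (U (θ + t • ω) t').comp (ι.comp (U θ t)) = U θ (t + t'))
    (hint : ∀ θ, IntegrableOn (duhamelIntegrand U F ω θ) (Ioi 0)) (θ : E) {t : ℝ} (ht : 0 < t) :
    ∫ τ in Ioi 0, duhamelIntegrand U F ω θ τ =
      U (θ - t • ω) t (ι (∫ τ in Ioi 0, duhamelIntegrand U F ω (θ - t • ω) τ)) +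
        ∫ s in Ioc 0 t, duhamelIntegrand U F ω θ s := by
  have htail : ∫ τ in Ioi t, duhamelIntegrand U F ω θ τ =
      U (θ - t • ω) t (ι (∫ τ in Ioi 0, duhamelIntegrand U F ω (θ - t • ω) τ)) := by
    rw [← ContinuousLinearMap.comp_apply, ← ContinuousLinearMap.integral_comp_comm _ (hint _),
      ← zero_add t, ← setIntegral_Ioi_comp_add_right, zero_add]
    refine setIntegral_congr_fun measurableSet_Ioi fun σ hσ => ?_
    exact (cocycle_apply_duhamelIntegrand hcocycle ht hσ).symm
  rw [setIntegral_Ioi_eq_integral_Ioc_add_integral_Ioi ht.le (hint θ), htail, add_comm]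

theorem eq_of_bounded_of_mild {Ch α β : ℝ} (hβ : 0 < β)
    (hrate : ∀ θ t, 0 < t → ‖U θ t‖ ≤ Ch * exp (-β * t) * t ^ (-α))
    {G : E → ℝ → X} {Δ₁ Δ₂ : E → X} (hΔ₁ : ∃ M, ∀ θ, ‖Δ₁ θ‖ ≤ M) (hΔ₂ : ∃ M, ∀ θ, ‖Δ₂ θ‖ ≤ M)
    (h₁ : ∀ θ t, 0 < t → Δ₁ θ = U (θ - t • ω) t (ι (Δ₁ (θ - t • ω))) + G θ t)
    (h₂ : ∀ θ t, 0 < t → Δ₂ θ = U (θ - t • ω) t (ι (Δ₂ (θ - t • ω))) + G θ t) :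
    Δ₁ = Δ₂ := by
  obtain ⟨M₁, hM₁⟩ := hΔ₁
  obtain ⟨M₂, hM₂⟩ := hΔ₂
  funext θ
  set K := ‖ι‖ * (M₁ + M₂)
  have hdiff : ∀ θ', ‖ι (Δ₁ θ' - Δ₂ θ')‖ ≤ K := fun θ' =>
    ι.le_opNorm_of_le ((norm_sub_le _ _).trans (add_le_add (hM₁ θ') (hM₂ θ')))
  have hbound : ∀ t > 0, ‖Δ₁ θ - Δ₂ θ‖ ≤ Ch * K * (t ^ (-α) * exp (-β * t)) := fun t ht => by
    rw [h₁ θ t ht, h₂ θ t ht, add_sub_add_right_eq_sub, ← map_sub, ← map_sub]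
    exact ((U _ t).le_of_opNorm_le_of_le (hrate _ t ht) (hdiff _)).trans_eq (by ring)
  have hdecay : Tendsto (fun t => Ch * K * (t ^ (-α) * exp (-β * t))) atTop (𝓝 0) := by
    simpa using (tendsto_rpow_mul_exp_neg_mul_atTop_nhds_zero (-α) β hβ).const_mul (Ch * K)
  exact sub_eq_zero.1 (norm_le_zero_iff.1
    (ge_of_tendsto hdecay ((eventually_gt_atTop 0).mono hbound)))

end Cocycle

theorem stable_direction_duhamel_general
    (X Y : Type*) [NormedAddCommGroup X] [NormedSpace ℝ X] [CompleteSpace X]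
    [NormedAddCommGroup Y] [NormedSpace ℝ Y]
    (ι : X →L[ℝ] Y)
    (ℓ : ℕ) (ω : Fin ℓ → ℝ)
    (U : (Fin ℓ → ℝ) → ℝ → (Y →L[ℝ] X))
    (hUcont : ContinuousOn (fun p : (Fin ℓ → ℝ) × ℝ => U p.1 p.2) {p | 0 < p.2})
    (hcocycle : ∀ (θ : Fin ℓ → ℝ) (t t' : ℝ), 0 < t → 0 < t' →
      (U (θ + t • ω) t').comp (ι.comp (U θ t)) = U θ (t + t'))
    (Ch β α : ℝ) (hβ : 0 < β) (hα1 : α < 1)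
    (hrate : ∀ (θ : Fin ℓ → ℝ) (t : ℝ), 0 < t →
      ‖U θ t‖ ≤ Ch * Real.exp (-β * t) * t ^ (-α))
    (F : (Fin ℓ → ℝ) → Y)
    (hFcont : Continuous F)
    (hFbdd : ∃ M : ℝ, ∀ θ, ‖F θ‖ ≤ M) :
    ∃ Δ : (Fin ℓ → ℝ) → X,
      (∀ θ, IntegrableOn (fun τ => U (θ - τ • ω) τ (F (θ - τ • ω))) (Set.Ioi (0 : ℝ))) ∧
      (∀ θ, Δ θ = ∫ τ in Set.Ioi (0 : ℝ), U (θ - τ • ω) τ (F (θ - τ • ω))) ∧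
      (∀ M : ℝ, (∀ θ, ‖F θ‖ ≤ M) →
        ∀ θ, ‖Δ θ‖ ≤ Ch * β ^ (α - 1) * Real.Gamma (1 - α) * M) ∧
      (∀ (θ : Fin ℓ → ℝ) (t : ℝ), 0 < t →
        Δ θ = U (θ - t • ω) t (ι (Δ (θ - t • ω)))
          + ∫ s in Set.Ioc (0 : ℝ) t, U (θ - s • ω) s (F (θ - s • ω))) ∧
      (∀ Δ' : (Fin ℓ → ℝ) → X, (∃ M' : ℝ, ∀ θ, ‖Δ' θ‖ ≤ M') →
        (∀ (θ : Fin ℓ → ℝ) (t : ℝ), 0 < t →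
          Δ' θ = U (θ - t • ω) t (ι (Δ' (θ - t • ω)))
            + ∫ s in Set.Ioc (0 : ℝ) t, U (θ - s • ω) s (F (θ - s • ω))) →
        Δ' = Δ) := by
  obtain ⟨M₀, hM₀⟩ := hFbdd
  have hint : ∀ θ, IntegrableOn (duhamelIntegrand U F ω θ) (Ioi 0) := fun θ =>
    integrableOn_Ioi_of_norm_le_rpow_mul_exp hα1 hβ (continuousOn_duhamelIntegrand hUcont hFcont θ)
      (norm_duhamelIntegrand_le hrate hM₀ θ)
  have hbound : ∀ M : ℝ, (∀ θ, ‖F θ‖ ≤ M) → ∀ θ,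
      ‖∫ τ in Ioi 0, duhamelIntegrand U F ω θ τ‖ ≤ Ch * β ^ (α - 1) * Gamma (1 - α) * M :=
    fun M hM θ => (norm_integral_Ioi_le_of_norm_le_rpow_mul_exp hα1 hβ
      (norm_duhamelIntegrand_le hrate hM θ)).trans_eq (by ring)
  have hmild := fun θ t (ht : 0 < t) => integral_duhamelIntegrand_eq hcocycle hint θ ht
  exact ⟨fun θ => ∫ τ in Ioi 0, duhamelIntegrand U F ω θ τ, hint, fun θ => rfl, hbound, hmild,
    fun Δ' hΔ' hmild' => eq_of_bounded_of_mild hβ hrate hΔ' ⟨_, hbound M₀ hM₀⟩ hmild' hmild⟩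

/-- Lemma `computational` (stable direction): for a smoothing, exponentially contracting
cocycle `U_θ(t) : Y → X` over the rotation `θ ↦ θ + ωt` (with rate
`‖U_θ(t)‖_{Y,X} ≤ C_h e^{−βt} t^{−α}`, `α ∈ (0,1)`), and bounded continuous periodic
data `F : 𝕋^ℓ → Y`, the equation `∂_ω Δ − 𝓛 Δ = F`, in the mild (Duhamel) sense, has a
unique bounded solution `Δ(θ) = ∫₀^∞ U_{θ−ωτ}(τ) F(θ−ωτ) dτ`, with
`‖Δ(θ)‖_X ≤ C_h β^{α−1} Γ(1−α) sup ‖F‖_Y`. -/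
theorem stable_direction_duhamel
    (X Y : Type*) [NormedAddCommGroup X] [NormedSpace ℝ X] [CompleteSpace X]
    [NormedAddCommGroup Y] [NormedSpace ℝ Y] [CompleteSpace Y]
    (ι : X →L[ℝ] Y) (hι : Function.Injective ι)
    (ℓ : ℕ) (hℓ : 1 ≤ ℓ) (ω : Fin ℓ → ℝ)
    (U : (Fin ℓ → ℝ) → ℝ → (Y →L[ℝ] X))
    (hUper : ∀ (θ : Fin ℓ → ℝ) (k : Fin ℓ → ℤ) (t : ℝ),
      U (θ + fun i => (k i : ℝ)) t = U θ t)
    (hUcont : ContinuousOn (fun p : (Fin ℓ → ℝ) × ℝ => U p.1 p.2) {p | 0 < p.2})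
    (hcocycle : ∀ (θ : Fin ℓ → ℝ) (t t' : ℝ), 0 < t → 0 < t' →
      (U (θ + t • ω) t').comp (ι.comp (U θ t)) = U θ (t + t'))
    (Ch β α : ℝ) (hCh : 0 < Ch) (hβ : 0 < β) (hα0 : 0 < α) (hα1 : α < 1)
    (hrate : ∀ (θ : Fin ℓ → ℝ) (t : ℝ), 0 < t →
      ‖U θ t‖ ≤ Ch * Real.exp (-β * t) * t ^ (-α))
    (F : (Fin ℓ → ℝ) → Y)
    (hFcont : Continuous F)
    (hFper : ∀ (θ : Fin ℓ → ℝ) (k : Fin ℓ → ℤ), F (θ + fun i => (k i : ℝ)) = F θ)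
    (hFbdd : ∃ M : ℝ, ∀ θ, ‖F θ‖ ≤ M) :
    ∃ Δ : (Fin ℓ → ℝ) → X,
      (∀ θ, IntegrableOn (fun τ => U (θ - τ • ω) τ (F (θ - τ • ω))) (Set.Ioi (0 : ℝ))) ∧
      (∀ θ, Δ θ = ∫ τ in Set.Ioi (0 : ℝ), U (θ - τ • ω) τ (F (θ - τ • ω))) ∧
      (∀ M : ℝ, (∀ θ, ‖F θ‖ ≤ M) →
        ∀ θ, ‖Δ θ‖ ≤ Ch * β ^ (α - 1) * Real.Gamma (1 - α) * M) ∧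
      (∀ (θ : Fin ℓ → ℝ) (t : ℝ), 0 < t →
        Δ θ = U (θ - t • ω) t (ι (Δ (θ - t • ω)))
          + ∫ s in Set.Ioc (0 : ℝ) t, U (θ - s • ω) s (F (θ - s • ω))) ∧
      (∀ Δ' : (Fin ℓ → ℝ) → X, (∃ M' : ℝ, ∀ θ, ‖Δ' θ‖ ≤ M') →
        (∀ (θ : Fin ℓ → ℝ) (t : ℝ), 0 < t →
          Δ' θ = U (θ - t • ω) t (ι (Δ' (θ - t • ω)))
            + ∫ s in Set.Ioc (0 : ℝ) t, U (θ - s • ω) s (F (θ - s • ω))) →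
        Δ' = Δ) :=
  stable_direction_duhamel_general X Y ι ℓ ω U hUcont hcocycle Ch β α hβ hα1 hrate F hFcont hFbdd
end
end
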